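/- arXiv:2604.05713 — 7 statements merged into one kernel-verified Lean document; each statement's English description precedes it below -/
import Mathlib

section
/- Let M≥3 be an integer. Define words ω_1 = 0^{M-1}1 and ω_2 = 0^{M-2}11 in {0,1}^M, and let Ξ_M ⊂ {0,1}^ℕ be the set of all infinite concatenations a_0a_1a_2⋯ with each a_i ∈ {ω_1, ω_2}. Then Ξ_M ∩ σ^j(Ξ_M) = ∅ for every 1 ≤ j ≤ M−1, where σ is the shift map on {0,1}^ℕ. -/
/-- The one-sided shift map on `{0,1}^ℕ`. -/
def shift1 (x : ℕ → Fin 2) : ℕ → Fin 2 := fun n => x (n + 1)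

/-!
If `x` and `y = σ^j x` both lie in `Ξ_M`, then `y_{M-1-j} = x_{M-1} = 1` because every block ends
in `1`. Inside a block the only `1` before the last letter is at position `M - 2`, so `j = 1`.
But then `y_{M-1} = x_M = 0`, because for `M ≥ 3` every block starts with `0`, while `y_{M-1}`
ends the first block of `y` and is `1`.
-/

lemma shift1_iterate_apply (x : ℕ → Fin 2) (j n : ℕ) : shift1^[j] x n = x (n + j) := by
  induction j generalizing x with
  | zero => rfl
  | succ j ih => rw [Function.iterate_succ_apply, ih]; rfl

section Blocks

variable {M : ℕ} {ω₁ ω₂ w : Fin M → Fin 2}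

lemma block_apply_eq_one_of_val_eq
    (hω₁ : ∀ i : Fin M, ω₁ i = if (i : ℕ) = M - 1 then 1 else 0)
    (hω₂ : ∀ i : Fin M, ω₂ i = if M - 2 ≤ (i : ℕ) then 1 else 0)
    (hw : w = ω₁ ∨ w = ω₂) {i : Fin M} (hi : (i : ℕ) = M - 1) : w i = 1 := by
  rcases hw with rfl | rfl
  · rw [hω₁, if_pos hi]
  · rw [hω₂, if_pos (by omega)]

lemma block_apply_eq_zero_of_val_eq_zero (hM : 3 ≤ M)
    (hω₁ : ∀ i : Fin M, ω₁ i = if (i : ℕ) = M - 1 then 1 else 0)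
    (hω₂ : ∀ i : Fin M, ω₂ i = if M - 2 ≤ (i : ℕ) then 1 else 0)
    (hw : w = ω₁ ∨ w = ω₂) {i : Fin M} (hi : (i : ℕ) = 0) : w i = 0 := by
  rcases hw with rfl | rfl
  · rw [hω₁, if_neg (by omega)]
  · rw [hω₂, if_neg (by omega)]

lemma le_val_of_block_apply_eq_one
    (hω₁ : ∀ i : Fin M, ω₁ i = if (i : ℕ) = M - 1 then 1 else 0)
    (hω₂ : ∀ i : Fin M, ω₂ i = if M - 2 ≤ (i : ℕ) then 1 else 0)
    (hw : w = ω₁ ∨ w = ω₂) {i : Fin M} (h : w i = 1) : M - 2 ≤ (i : ℕ) := by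
  by_contra hi
  rcases hw with rfl | rfl
  · rw [hω₁, if_neg (by omega)] at h
    exact absurd h (by decide)
  · rw [hω₂, if_neg hi] at h
    exact absurd h (by decide)

end Blocks

/-- For `M ≥ 3`, the set `Ξ_M` of infinite concatenations of the blocks
`ω₁ = 0^{M-1}1` and `ω₂ = 0^{M-2}11` satisfies `Ξ_M ∩ σ^j(Ξ_M) = ∅` for `1 ≤ j ≤ M−1`. -/
theorem xi_disjoint_from_shifts (M : ℕ) (hM : 3 ≤ M)
    (ω₁ ω₂ : Fin M → Fin 2)
    (hω₁ : ∀ i : Fin M, ω₁ i = if (i : ℕ) = M - 1 then 1 else 0)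
    (hω₂ : ∀ i : Fin M, ω₂ i = if M - 2 ≤ (i : ℕ) then 1 else 0)
    (Ξ : Set (ℕ → Fin 2))
    (hΞ : Ξ = {x | ∀ k : ℕ,
      (fun i : Fin M => x (M * k + (i : ℕ))) = ω₁ ∨
      (fun i : Fin M => x (M * k + (i : ℕ))) = ω₂}) :
    ∀ j : ℕ, 1 ≤ j → j ≤ M - 1 → Ξ ∩ shift1^[j] '' Ξ = ∅ := by
  subst hΞ
  intro j hj hjM
  refine Set.eq_empty_of_forall_notMem ?_
  rintro _ ⟨hy, x, hx, rfl⟩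
  have hx_last : x (M - 1) = 1 := by
    simpa using block_apply_eq_one_of_val_eq hω₁ hω₂ (hx 0) (i := ⟨M - 1, by omega⟩) rfl
  have hx_next : x M = 0 := by
    simpa using block_apply_eq_zero_of_val_eq_zero hM hω₁ hω₂ (hx 1) (i := ⟨0, by omega⟩) rfl
  have hj_one : j = 1 := by
    have := le_val_of_block_apply_eq_one hω₁ hω₂ (hy 0) (i := ⟨M - 1 - j, by omega⟩)
      (by simpa [shift1_iterate_apply, Nat.sub_add_cancel (show j ≤ M - 1 from hjM)] using hx_last)
    simp only at this
    omega
  have hy_last : shift1^[j] x (M - 1) = 1 := by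
    simpa using block_apply_eq_one_of_val_eq hω₁ hω₂ (hy 0) (i := ⟨M - 1, by omega⟩) rfl
  rw [shift1_iterate_apply, hj_one, Nat.sub_add_cancel (by omega), hx_next] at hy_last
  exact absurd hy_last (by decide)
end

section
/- Let (X,f) be a dynamical system satisfying the weak specification property with mistake function g. Then (X,f) satisfies the modified almost specification property with the same mistake function g, with k_g(ε) := min{m∈ℕ⁺ : g(n,ε) ≤ n−1 for all n≥m}. -/
/-!
Pull each `x j` back to a point `y j` with `f^[j n] (y j) = x j`, and let weak specification
shadow the orbit of `y j` on the last `n - g(n, ε)` times of the `j`-th block `[j n, j n + n)`.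
The first `g(n, ε)` times of every block serve both as the gaps that weak specification needs
and as the allowed mistakes; `n ≥ k_g(ε)` guarantees that each block keeps a nonempty tail.
-/

open Filter

/-- The mistake dynamical ball `B_n(f; g; x, ε)`: points that `ε`-track the orbit of
`x` on some nonempty set of at least `n - g` of the times `0,…,n-1`. -/
def mistakeBall {X : Type*} [MetricSpace X] (f : X → X) (n g : ℕ) (x : X) (ε : ℝ) :
    Set X :=
  {y | ∃ Λ : Finset (Fin n), Λ.Nonempty ∧ n - g ≤ Λ.card ∧
    ∀ i ∈ Λ, dist (f^[(i : ℕ)] y) (f^[(i : ℕ)] x) < ε}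

def HasWeakSpecification {X : Type*} [MetricSpace X] (f : X → X) (g : ℕ → ℝ → ℕ)
    (ε₀ : ℝ) : Prop :=
  ∀ (k : ℕ) (x : Fin k → X) (a b : Fin k → ℕ) (ε : ℝ), 0 < ε → ε ≤ ε₀ →
    (∀ i, a i ≤ b i) →
    (∀ (i : Fin k) (h : (i : ℕ) + 1 < k),
      b i < a ⟨(i : ℕ) + 1, h⟩ ∧
      g (b ⟨(i : ℕ) + 1, h⟩ - a ⟨(i : ℕ) + 1, h⟩ + 1) ε ≤ a ⟨(i : ℕ) + 1, h⟩ - b i) →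
    ∃ z : X, ∀ (i : Fin k) (n : ℕ), a i ≤ n → n ≤ b i →
      dist (f^[n] z) (f^[n] (x i)) < ε

theorem exists_pos_forall_ge_le_sub_one_of_tendsto_div {u : ℕ → ℕ}
    (hu : Tendsto (fun n : ℕ => (u n : ℝ) / n) atTop (nhds 0)) :
    ∃ N, 0 < N ∧ ∀ n ≥ N, u n ≤ n - 1 := by
  obtain ⟨N, hN⟩ := eventually_atTop.mp (hu.eventually_lt_const one_pos)
  refine ⟨max N 1, by omega, fun n hn => ?_⟩
  have hn_pos : (0 : ℝ) < n := by exact_mod_cast (show 0 < n by omega)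
  have : (u n : ℝ) < n := (div_lt_one hn_pos).mp (hN n (le_of_max_le_left hn))
  exact Nat.le_sub_one_of_lt (by exact_mod_cast this)

theorem mem_mistakeBall_of_forall_dist_lt {X : Type*} [MetricSpace X] {f : X → X}
    {n g : ℕ} {x y : X} {ε : ℝ} (hg : g < n)
    (h : ∀ i, g ≤ i → i < n → dist (f^[i] y) (f^[i] x) < ε) :
    y ∈ mistakeBall f n g x ε := by
  refine ⟨(Finset.Ico g n).attachFin fun i hi => (Finset.mem_Ico.mp hi).2,
    ⟨⟨g, hg⟩, by simp [hg]⟩, by rw [Finset.card_attachFin, Nat.card_Ico], fun i hi => ?_⟩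
  obtain ⟨hgi, hin⟩ := Finset.mem_Ico.mp ((Finset.mem_attachFin _).mp hi)
  exact h i hgi hin

/-- The gap `g n ε + 1` before each tail, of length `n - g n ε`, is long enough because `g` is
non-decreasing. -/
theorem HasWeakSpecification.exists_dist_lt_on_block_tails {X : Type*} [MetricSpace X]
    {f : X → X} {g : ℕ → ℝ → ℕ} {ε₀ : ℝ} (hws : HasWeakSpecification f g ε₀)
    {ε : ℝ} (hε : 0 < ε) (hεε₀ : ε ≤ ε₀) {n : ℕ} (hgn : g n ε < n)
    (hgmono : ∀ k, 0 < k → k ≤ n → g k ε ≤ g n ε) {m : ℕ} (y : Fin m → X) :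
    ∃ z : X, ∀ (j : Fin m) (i : ℕ), g n ε ≤ i → i < n →
      dist (f^[j * n + i] z) (f^[j * n + i] (y j)) < ε := by
  obtain ⟨z, hz⟩ := hws m y (fun j => j * n + g n ε) (fun j => j * n + (n - 1)) ε hε hεε₀
    (fun _ => by omega) fun j hj => by
      have htail : (j + 1) * n + (n - 1) - ((j + 1) * n + g n ε) + 1 = n - g n ε := by omega
      have hmono := hgmono (n - g n ε) (by omega) (by omega)
      simp only [htail]
      rw [add_one_mul]
      omega
  exact ⟨z, fun j i hgi hin => hz j (j * n + i) (by omega) (by omega)⟩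

theorem weak_specification_implies_modified_almost_specification_general
    {X : Type*} [MetricSpace X]
    (f : X → X)
    (ε₀ : ℝ) (g : ℕ → ℝ → ℕ)
    (hgmono : ∀ ε, 0 < ε → ε ≤ ε₀ → ∀ m n : ℕ, 0 < m → m ≤ n → g m ε ≤ g n ε)
    (hglim : ∀ ε, 0 < ε → ε ≤ ε₀ →
      Tendsto (fun n : ℕ => (g n ε : ℝ) / n) atTop (nhds 0))
    (hws : ∀ (k : ℕ) (x : Fin k → X) (a b : Fin k → ℕ) (ε : ℝ), 0 < ε → ε ≤ ε₀ →
      (∀ i, a i ≤ b i) →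
      (∀ (i : Fin k) (h : (i : ℕ) + 1 < k),
        b i < a ⟨(i : ℕ) + 1, h⟩ ∧
        g (b ⟨(i : ℕ) + 1, h⟩ - a ⟨(i : ℕ) + 1, h⟩ + 1) ε ≤ a ⟨(i : ℕ) + 1, h⟩ - b i) →
      ∃ z : X, ∀ (i : Fin k) (n : ℕ), a i ≤ n → n ≤ b i →
        dist (f^[n] z) (f^[n] (x i)) < ε)
    (kg : ℝ → ℕ)
    (hkg : ∀ ε : ℝ, kg ε = sInf {m : ℕ | 0 < m ∧ ∀ n ≥ m, g n ε ≤ n - 1}) :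
    ∀ (m : ℕ) (x : Fin m → X), (∀ j, x j ∈ ⋂ i : ℕ, Set.range f^[i]) →
      ∀ ε : ℝ, 0 < ε → ε ≤ ε₀ → ∀ n : ℕ, kg ε ≤ n →
        (⋂ j : Fin m,
          f^[(j : ℕ) * n] ⁻¹' mistakeBall f n (g n ε) (x j) ε).Nonempty := by
  intro m x hx ε hε hεε₀ n hn
  obtain ⟨hkg_pos, hkg_le⟩ : kg ε ∈ {m : ℕ | 0 < m ∧ ∀ n ≥ m, g n ε ≤ n - 1} :=
    hkg ε ▸ Nat.sInf_mem (exists_pos_forall_ge_le_sub_one_of_tendsto_div (hglim ε hε hεε₀))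
  have hgn : g n ε < n := by have := hkg_le n hn; omega
  choose y hy using fun j : Fin m => Set.mem_iInter.mp (hx j) (j * n)
  obtain ⟨z, hz⟩ := HasWeakSpecification.exists_dist_lt_on_block_tails hws hε hεε₀ hgn
    (fun k hk hkn => hgmono ε hε hεε₀ k n hk hkn) y
  refine ⟨z, Set.mem_iInter.mpr fun j => mem_mistakeBall_of_forall_dist_lt hgn fun i hgi hin => ?_⟩
  rw [← hy j, ← Function.iterate_add_apply, ← Function.iterate_add_apply, add_comm]
  exact hz j i hgi hin

/-- Weak specification with mistake function `g` implies the modified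
almost specification property with the same mistake function `g` and
`k_g(ε) = min {m ∈ ℕ⁺ : g(n,ε) ≤ n − 1 for all n ≥ m}`. -/
theorem weak_specification_implies_modified_almost_specification
    {X : Type*} [MetricSpace X] [CompactSpace X]
    (f : X → X) (hf : Continuous f)
    (ε₀ : ℝ) (hε₀ : 0 < ε₀) (g : ℕ → ℝ → ℕ)
    (hgmono : ∀ ε, 0 < ε → ε ≤ ε₀ → ∀ m n : ℕ, 0 < m → m ≤ n → g m ε ≤ g n ε)
    (hglim : ∀ ε, 0 < ε → ε ≤ ε₀ →
      Tendsto (fun n : ℕ => (g n ε : ℝ) / n) atTop (nhds 0))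
    (hws : ∀ (k : ℕ) (x : Fin k → X) (a b : Fin k → ℕ) (ε : ℝ), 0 < ε → ε ≤ ε₀ →
      (∀ i, a i ≤ b i) →
      (∀ (i : Fin k) (h : (i : ℕ) + 1 < k),
        b i < a ⟨(i : ℕ) + 1, h⟩ ∧
        g (b ⟨(i : ℕ) + 1, h⟩ - a ⟨(i : ℕ) + 1, h⟩ + 1) ε ≤ a ⟨(i : ℕ) + 1, h⟩ - b i) →
      ∃ z : X, ∀ (i : Fin k) (n : ℕ), a i ≤ n → n ≤ b i →
        dist (f^[n] z) (f^[n] (x i)) < ε)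
    (kg : ℝ → ℕ)
    (hkg : ∀ ε : ℝ, kg ε = sInf {m : ℕ | 0 < m ∧ ∀ n ≥ m, g n ε ≤ n - 1}) :
    ∀ (m : ℕ) (x : Fin m → X), (∀ j, x j ∈ ⋂ i : ℕ, Set.range f^[i]) →
      ∀ ε : ℝ, 0 < ε → ε ≤ ε₀ → ∀ n : ℕ, kg ε ≤ n →
        (⋂ j : Fin m,
          f^[(j : ℕ) * n] ⁻¹' mistakeBall f n (g n ε) (x j) ε).Nonempty :=
  weak_specification_implies_modified_almost_specification_general f ε₀ g hgmono hglim hws kg hkg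
end

section
/- Let (A^ℕ, σ) be the one-sided full shift over an alphabet A with |A| = 2m for some m≥2. Then for every non-trivial weight ϑ ∈ ℓ^∞(ℕ), the set N_ϑ(σ, A^ℕ) of points correlated with ϑ has Bowen topological entropy at least log m. -/
open Filter
open scoped ENNReal

section Bowen

variable {X : Type*} [MetricSpace X]

/-- The Bowen ball of length `u` and radius `r` around `x`. -/
def dynBall (f : X → X) (x : X) (u : ℕ) (r : ℝ) : Set X :=
  {y | ∀ i < u, dist (f^[i] y) (f^[i] x) < r}

/-- Bowen's outer quantity `C(E; t, n, r, f)`: infimum, over countable covers of `E` by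
Bowen balls of lengths `≥ n`, of `∑ e^{-t·u}`. -/
noncomputable def bowenC (f : X → X) (E : Set X) (t : ℝ) (n : ℕ) (r : ℝ) : ℝ≥0∞ :=
  ⨅ (c : ℕ → X × ℕ) (_ : (∀ k, n ≤ (c k).2) ∧
      E ⊆ ⋃ k, dynBall f (c k).1 (c k).2 r),
    ∑' k, ENNReal.ofReal (Real.exp (-(t * (c k).2)))

/-- `C(E; t, r, f) = lim_{n→∞} C(E; t, n, r, f)` (the quantity is monotone in `n`). -/
noncomputable def bowenCLim (f : X → X) (E : Set X) (t r : ℝ) : ℝ≥0∞ :=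
  ⨆ n : ℕ, bowenC f E t n r

/-- The Bowen entropy of `E` at scale `r`. -/
noncomputable def bowenEntropyAt (f : X → X) (E : Set X) (r : ℝ) : EReal :=
  sInf (Real.toEReal '' {t : ℝ | bowenCLim f E t r = 0})

/-- The Bowen topological entropy of a subset `E`. -/
noncomputable def bowenEntropy (f : X → X) (E : Set X) : EReal :=
  ⨆ (r : ℝ) (_ : 0 < r), bowenEntropyAt f E r

/-- The set `N_ϑ(f,X)` of points correlated with the weight `ϑ`. -/
def corrSet (f : X → X) (ϑ : ℕ → ℝ) : Set X :=
  {x | ∃ φ : X → ℝ, Continuous φ ∧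
    0 < Filter.limsup
        (fun N : ℕ => |∑ n ∈ Finset.range N, ϑ n * φ (f^[n] x)| / N) atTop}

end Bowen

-- The metric on sequence spaces: `dist x y = (1/2)^n` where `n` is the first index
-- where `x` and `y` differ.
attribute [local instance] PiNat.metricSpace

/-- The one-sided shift map on `(Fin a)^ℕ`. -/
def fullShift (a : ℕ) (x : ℕ → Fin a) : ℕ → Fin a := fun n => x (n + 1)

/-
Proof idea: send a sequence `y` over `m` letters to the sequence over `2m` letters that
writes `y n` in the lower half of the alphabet when `ϑ n ≥ 0` and in the upper half otherwise.
Against the test function `x ↦ ±1` (the sign recording which half `x 0` lies in), every such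
image point has Birkhoff sums `∑ |ϑ n|`, so it is correlated with `ϑ`. The map is injective letter
by letter, so it pulls Bowen balls of radius `1/2` and length `u` back into cylinders of the
uniform Bernoulli measure on `m` letters, of mass `m⁻ᵘ = e^{-u log m}`; the mass distribution
principle then bounds the entropy below by `log m`.
-/

open MeasureTheory ProbabilityTheory

section MassDistribution

variable {X Y : Type*} [MetricSpace X] [MeasurableSpace Y]

lemma measure_preimage_le_bowenC (f : X → X) (E : Set X) (μ : Measure Y) (g : Y → X)
    {t r : ℝ} (hball : ∀ x u, μ (g ⁻¹' dynBall f x u r) ≤ ENNReal.ofReal (Real.exp (-(t * u))))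
    (n : ℕ) : μ (g ⁻¹' E) ≤ bowenC f E t n r := by
  refine le_iInf₂ fun c hc => ?_
  calc μ (g ⁻¹' E) ≤ μ (⋃ k, g ⁻¹' dynBall f (c k).1 (c k).2 r) := by
        rw [← Set.preimage_iUnion]
        exact measure_mono (Set.preimage_mono hc.2)
    _ ≤ ∑' k, μ (g ⁻¹' dynBall f (c k).1 (c k).2 r) := measure_iUnion_le _
    _ ≤ ∑' k, ENNReal.ofReal (Real.exp (-(t * (c k).2))) :=
        ENNReal.tsum_le_tsum fun k => hball _ _

/-- The mass distribution principle for Bowen entropy. -/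
theorem le_bowenEntropyAt_of_measure_preimage_dynBall_le (f : X → X) (E : Set X)
    (μ : Measure Y) (g : Y → X) {s r : ℝ} (hE : μ (g ⁻¹' E) ≠ 0)
    (hball : ∀ x u, μ (g ⁻¹' dynBall f x u r) ≤ ENNReal.ofReal (Real.exp (-(s * u)))) :
    (s : EReal) ≤ bowenEntropyAt f E r := by
  refine le_sInf ?_
  rintro _ ⟨t, ht, rfl⟩
  rw [EReal.coe_le_coe_iff]
  by_contra! hts
  have hball_t : ∀ x u, μ (g ⁻¹' dynBall f x u r) ≤ ENNReal.ofReal (Real.exp (-(t * u))) :=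
    fun x u => (hball x u).trans <| ENNReal.ofReal_le_ofReal <| Real.exp_le_exp.mpr <| by
      nlinarith [(Nat.cast_nonneg u : (0 : ℝ) ≤ u)]
  refine hE (le_antisymm ?_ bot_le)
  calc μ (g ⁻¹' E) ≤ bowenC f E t 0 r := measure_preimage_le_bowenC f E μ g hball_t 0
    _ ≤ bowenCLim f E t r := le_iSup (fun n => bowenC f E t n r) 0
    _ = 0 := ht

lemma bowenEntropyAt_le_bowenEntropy (f : X → X) (E : Set X) {r : ℝ} (hr : 0 < r) :
    bowenEntropyAt f E r ≤ bowenEntropy f E :=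
  le_iSup₂_of_le r hr le_rfl

end MassDistribution

lemma fullShift_iterate_apply (a : ℕ) (x : ℕ → Fin a) (n k : ℕ) :
    (fullShift a)^[n] x k = x (k + n) := by
  induction n generalizing x with
  | zero => rfl
  | succ n ih => exact ih (fullShift a x)

lemma dynBall_fullShift_subset_cylinder (a : ℕ) (x : ℕ → Fin a) (u : ℕ) :
    dynBall (fullShift a) x u (1 / 2) ⊆ PiNat.cylinder x u := by
  intro y hy i hi
  have h := PiNat.apply_eq_of_dist_lt (n := 0) ((hy i hi).trans (by norm_num)) le_rfl
  simpa [fullShift_iterate_apply] using h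

lemma infinitePi_uniformOn_cylinder {α : Type*} [Fintype α] [Nonempty α] [MeasurableSpace α]
    [MeasurableSingletonClass α] (w : ℕ → α) (u : ℕ) :
    Measure.infinitePi (fun _ => uniformOn (Set.univ : Set α)) (PiNat.cylinder w u)
      = ((Fintype.card α : ℝ≥0∞)⁻¹) ^ u := by
  have hcyl : PiNat.cylinder w u = Set.pi (Finset.range u : Set ℕ) fun i => {w i} := by
    ext y
    simp [PiNat.cylinder]
  rw [hcyl, Measure.infinitePi_pi _ fun i _ => measurableSet_singleton _]
  simp [uniformOn_univ]

lemma natCast_inv_pow_eq_ofReal_exp {m : ℕ} (hm : 0 < m) (u : ℕ) :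
    ((m : ℝ≥0∞)⁻¹) ^ u = ENNReal.ofReal (Real.exp (-(Real.log m * u))) := by
  have hm' : (0 : ℝ) < m := Nat.cast_pos.mpr hm
  rw [show -(Real.log m * u) = u * -Real.log m by ring, Real.exp_nat_mul, Real.exp_neg,
    Real.exp_log hm', ENNReal.ofReal_pow (by positivity), ENNReal.ofReal_inv_of_pos hm',
    ENNReal.ofReal_natCast]

noncomputable section SignedLift

variable (m : ℕ) (ϑ : ℕ → ℝ)

def signedLetter (n : ℕ) (j : Fin m) : Fin (2 * m) :=
  if 0 ≤ ϑ n then ⟨j, by omega⟩ else ⟨j + m, by omega⟩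

def signedLift (y : ℕ → Fin m) : ℕ → Fin (2 * m) := fun n => signedLetter m ϑ n (y n)

def halfSign (x : ℕ → Fin (2 * m)) : ℝ := if (x 0 : ℕ) < m then 1 else -1

variable {m ϑ}

lemma signedLetter_lt_iff (n : ℕ) (j : Fin m) : (signedLetter m ϑ n j : ℕ) < m ↔ 0 ≤ ϑ n := by
  unfold signedLetter
  split_ifs with h <;> simp [h]

lemma signedLetter_injective (n : ℕ) : Function.Injective (signedLetter m ϑ n) := by
  intro j k h
  unfold signedLetter at h
  split_ifs at h <;> simpa [Fin.ext_iff] using h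

lemma continuous_halfSign : Continuous (halfSign m) :=
  (continuous_of_discreteTopology
    (f := fun j : Fin (2 * m) => if (j : ℕ) < m then (1 : ℝ) else -1)).comp (continuous_apply 0)

lemma mul_halfSign_signedLift (y : ℕ → Fin m) (n : ℕ) :
    ϑ n * halfSign m ((fullShift (2 * m))^[n] (signedLift m ϑ y)) = |ϑ n| := by
  have hx0 : (fullShift (2 * m))^[n] (signedLift m ϑ y) 0 = signedLetter m ϑ n (y n) := by
    simp [fullShift_iterate_apply, signedLift]
  by_cases h : 0 ≤ ϑ n
  · simp [halfSign, hx0, (signedLetter_lt_iff n (y n)).mpr h, abs_of_nonneg h]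
  · simp [halfSign, hx0, mt (signedLetter_lt_iff n (y n)).mp h, abs_of_neg (not_le.mp h)]

lemma signedLift_mem_corrSet
    (hϑ : 0 < limsup (fun N : ℕ => (∑ n ∈ Finset.range N, |ϑ n|) / N) atTop)
    (y : ℕ → Fin m) : signedLift m ϑ y ∈ corrSet (fullShift (2 * m)) ϑ := by
  refine ⟨halfSign m, continuous_halfSign, ?_⟩
  simpa only [mul_halfSign_signedLift,
    abs_of_nonneg (Finset.sum_nonneg fun n _ => abs_nonneg (ϑ n))] using hϑ

lemma signedLift_preimage_cylinder_subset {x : ℕ → Fin (2 * m)} {u : ℕ} {y : ℕ → Fin m}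
    (hy : signedLift m ϑ y ∈ PiNat.cylinder x u) :
    signedLift m ϑ ⁻¹' PiNat.cylinder x u ⊆ PiNat.cylinder y u :=
  fun _ hz i hi => signedLetter_injective i ((hz i hi).trans (hy i hi).symm)

lemma measure_signedLift_preimage_dynBall_le [NeZero m] (x : ℕ → Fin (2 * m)) (u : ℕ) :
    Measure.infinitePi (fun _ => uniformOn (Set.univ : Set (Fin m)))
        (signedLift m ϑ ⁻¹' dynBall (fullShift (2 * m)) x u (1 / 2))
      ≤ ENNReal.ofReal (Real.exp (-(Real.log m * u))) := by
  rw [← natCast_inv_pow_eq_ofReal_exp (NeZero.pos m)]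
  calc _ ≤ Measure.infinitePi (fun _ => uniformOn (Set.univ : Set (Fin m)))
        (signedLift m ϑ ⁻¹' PiNat.cylinder x u) :=
        measure_mono (Set.preimage_mono (dynBall_fullShift_subset_cylinder _ x u))
    _ ≤ ((m : ℝ≥0∞)⁻¹) ^ u := by
        rcases (signedLift m ϑ ⁻¹' PiNat.cylinder x u).eq_empty_or_nonempty with h | ⟨y, hy⟩
        · simp [h]
        · simpa using (measure_mono (signedLift_preimage_cylinder_subset hy)).trans_eq
            (infinitePi_uniformOn_cylinder y u)

end SignedLift

theorem corrSet_entropy_full_shift_general (m : ℕ) (hm : 2 ≤ m)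
    (ϑ : ℕ → ℝ)
    (hnt : 0 < Filter.limsup
      (fun N : ℕ => (∑ n ∈ Finset.range N, |ϑ n|) / N) atTop) :
    (Real.log m : EReal) ≤
      bowenEntropy (fullShift (2 * m)) (corrSet (fullShift (2 * m)) ϑ) := by
  have : NeZero m := ⟨by omega⟩
  have hcorr : signedLift m ϑ ⁻¹' corrSet (fullShift (2 * m)) ϑ = Set.univ :=
    Set.eq_univ_of_forall (signedLift_mem_corrSet hnt)
  calc (Real.log m : EReal)
      ≤ bowenEntropyAt (fullShift (2 * m)) (corrSet (fullShift (2 * m)) ϑ) (1 / 2) :=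
        le_bowenEntropyAt_of_measure_preimage_dynBall_le _ _
          (Measure.infinitePi fun _ => uniformOn (Set.univ : Set (Fin m))) (signedLift m ϑ)
          (by simp [hcorr]) measure_signedLift_preimage_dynBall_le
    _ ≤ bowenEntropy (fullShift (2 * m)) (corrSet (fullShift (2 * m)) ϑ) :=
        bowenEntropyAt_le_bowenEntropy _ _ one_half_pos

/-- For the one-sided full shift on an alphabet of cardinality `2m`
(`m ≥ 2`), and any non-trivial weight `ϑ`, the set `N_ϑ(σ, A^ℕ)` of points correlated
with `ϑ` has Bowen topological entropy at least `log m`. -/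
theorem corrSet_entropy_full_shift (m : ℕ) (hm : 2 ≤ m)
    (ϑ : ℕ → ℝ) (hbd : ∃ C : ℝ, ∀ n, |ϑ n| ≤ C)
    (hnt : 0 < Filter.limsup
      (fun N : ℕ => (∑ n ∈ Finset.range N, |ϑ n|) / N) atTop) :
    (Real.log m : EReal) ≤
      bowenEntropy (fullShift (2 * m)) (corrSet (fullShift (2 * m)) ϑ) :=
  corrSet_entropy_full_shift_general m hm ϑ hnt
end

section
/- Let (X,f) be a dynamical system, L∈ℕ⁺, and μ an ergodic f^L-invariant Borel probability measure on X. Define ν := (1/L)∑_{i=0}^{L−1} μ∘f^{-i}. Then ν is an f-invariant Borel probability measure, ν is ergodic for f, and the metric entropies satisfy h_ν(f) = (1/L) h_μ(f^L). -/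
/-!
For an `f`-invariant measure, the entropy of a partition `P` is the limit of
`H(P ∨ f⁻¹P ∨ ⋯ ∨ f^{-(n-1)}P) / n` (Fekete). Entropy is concave in the measure with defect at
most `log L`, and pushing `μ` forward by `f^i` changes a join by a window of length `i < L`;
so the join entropies of `P` under `ν` and under `μ` differ by a bound independent of `n`, and
those under `μ` also grow like `n h_ν(f, P)`. Joins of length `n L` for `f` are joins of length
`n` for `f^L` of `P^L = P ∨ ⋯ ∨ f^{-(L-1)}P`, and refine the `f^L`-joins of `P`; hence
`h_μ(f^L, P^L) = L h_ν(f, P)` and `h_μ(f^L, Q) ≤ L h_ν(f, Q)`, and taking suprema gives the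
entropy formula. Ergodicity passes to `ν` because `ν` and `μ` agree on `f`-invariant sets.
-/

open MeasureTheory
open scoped ENNReal

section MetricEntropy

variable {X : Type*} [MeasurableSpace X]

/-- The join `⋁_{j<n} T^{-j} P` of the first `n` pullbacks of a finite partition `P`. -/
def joinPart (T : X → X) {k : ℕ} (P : Fin k → Set X) (n : ℕ) :
    (Fin n → Fin k) → Set X :=
  fun s => ⋂ j : Fin n, T^[(j : ℕ)] ⁻¹' P (s j)

/-- The static entropy `H(P) = ∑ -μ(Pᵢ) log μ(Pᵢ)` of a finite family of sets. -/
noncomputable def partH (μ : Measure X) {ι : Type*} [Fintype ι] (P : ι → Set X) : ℝ :=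
  ∑ i, Real.negMulLog (μ (P i)).toReal

/-- The dynamical entropy `h(T,P) = lim (1/n) H(⋁_{j<n} T^{-j}P)`, computed as the
infimum of the subadditive sequence. -/
noncomputable def entropyOfPart (μ : Measure X) (T : X → X) {k : ℕ}
    (P : Fin k → Set X) : ℝ :=
  ⨅ n : ℕ, partH μ (joinPart T P (n + 1)) / (n + 1)

/-- The Kolmogorov–Sinai metric entropy `h_μ(T)`: supremum of `h(T,P)` over finite
measurable partitions `P` of `X`. -/
noncomputable def metricEntropy (μ : Measure X) (T : X → X) : ℝ≥0∞ :=
  ⨆ (k : ℕ) (P : Fin k → Set X) (_ : (∀ i, MeasurableSet (P i)) ∧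
      Pairwise (Function.onFun Disjoint P) ∧ (⋃ i, P i) = Set.univ),
    ENNReal.ofReal (entropyOfPart μ T P)

end MetricEntropy

open Function Filter Finset
open scoped Topology

namespace Real

lemma negMulLog_sum_le {ι : Type*} (s : Finset ι) {x : ι → ℝ} (hx : ∀ i ∈ s, 0 ≤ x i) :
    negMulLog (∑ i ∈ s, x i) ≤ ∑ i ∈ s, negMulLog (x i) := by
  have hterm : ∀ i ∈ s, x i * -log (∑ j ∈ s, x j) ≤ negMulLog (x i) := by
    intro i hi
    rcases (hx i hi).eq_or_lt with h | h
    · simp [← h]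
    rw [negMulLog, neg_mul, ← mul_neg]
    exact mul_le_mul_of_nonneg_left
      (neg_le_neg (log_le_log h (single_le_sum hx hi))) (hx i hi)
  calc negMulLog (∑ i ∈ s, x i) = ∑ i ∈ s, x i * -log (∑ j ∈ s, x j) := by
        rw [negMulLog, ← Finset.sum_mul]; ring
    _ ≤ ∑ i ∈ s, negMulLog (x i) := sum_le_sum hterm

lemma sum_sum_negMulLog_le {ι κ : Type*} [Fintype ι] [Fintype κ] {p : ι → κ → ℝ}
    (hp : ∀ i j, 0 ≤ p i j) (hp1 : ∑ i, ∑ j, p i j = 1) :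
    ∑ i, ∑ j, negMulLog (p i j) ≤
      ∑ i, negMulLog (∑ j, p i j) + ∑ j, negMulLog (∑ i, p i j) := by
  -- `log y ≤ y - 1` at `y = P Q / p`, where `P, Q` are the two marginal masses of the cell
  have hterm : ∀ i j, negMulLog (p i j) ≤ p i j * -log (∑ j', p i j') +
      p i j * -log (∑ i', p i' j) + ((∑ j', p i j') * (∑ i', p i' j) - p i j) := by
    intro i j
    have hP := single_le_sum (fun j' _ => hp i j') (mem_univ j)
    have hQ := single_le_sum (fun i' _ => hp i' j) (mem_univ i)
    rcases (hp i j).eq_or_lt with h | h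
    · rw [← h] at hP hQ ⊢
      simpa using mul_nonneg hP hQ
    have hP' := h.trans_le hP
    have hQ' := h.trans_le hQ
    have hlog := log_le_sub_one_of_pos (div_pos (mul_pos hP' hQ') h)
    rw [log_div (mul_pos hP' hQ').ne' h.ne', log_mul hP'.ne' hQ'.ne'] at hlog
    have := mul_le_mul_of_nonneg_left hlog h.le
    rw [show p i j * ((∑ j', p i j') * (∑ i', p i' j) / p i j - 1) =
      (∑ j', p i j') * (∑ i', p i' j) - p i j by field_simp] at this
    rw [negMulLog]
    linarith
  have hrow : ∑ i, ∑ j, p i j * -log (∑ j', p i j') = ∑ i, negMulLog (∑ j, p i j) :=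
    sum_congr rfl fun i _ => by rw [← sum_mul, negMulLog]; ring
  have hcol : ∑ i, ∑ j, p i j * -log (∑ i', p i' j) = ∑ j, negMulLog (∑ i, p i j) := by
    rw [Finset.sum_comm]
    exact sum_congr rfl fun j _ => by rw [← sum_mul, negMulLog]; ring
  have hprod : ∑ i, ∑ j, (∑ j', p i j') * (∑ i', p i' j) = 1 := by
    rw [← sum_mul_sum, hp1, Finset.sum_comm, hp1, one_mul]
  calc ∑ i, ∑ j, negMulLog (p i j)
      ≤ ∑ i, ∑ j, (p i j * -log (∑ j', p i j') + p i j * -log (∑ i', p i' j) +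
          ((∑ j', p i j') * (∑ i', p i' j) - p i j)) :=
        sum_le_sum fun i _ => sum_le_sum fun j _ => hterm i j
    _ = ∑ i, negMulLog (∑ j, p i j) + ∑ j, negMulLog (∑ i, p i j) := by
        simp only [sum_add_distrib, sum_sub_distrib, hrow, hcol, hprod, hp1]
        ring

end Real

section Partition

variable {X : Type*} [MeasurableSpace X]

structure IsMeasurablePartition {ι : Type*} (A : ι → Set X) : Prop where
  measurableSet : ∀ i, MeasurableSet (A i)
  pairwise_disjoint : Pairwise (Disjoint on A)
  iUnion_eq_univ : ⋃ i, A i = Set.univ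

namespace IsMeasurablePartition

variable {ι κ : Type*} {A : ι → Set X} {B : κ → Set X}

lemma exists_mem (hA : IsMeasurablePartition A) (x : X) : ∃ i, x ∈ A i :=
  Set.mem_iUnion.1 (hA.iUnion_eq_univ ▸ Set.mem_univ x)

lemma comp_equiv (hA : IsMeasurablePartition A) (e : κ ≃ ι) :
    IsMeasurablePartition (A ∘ e) where
  measurableSet i := hA.measurableSet (e i)
  pairwise_disjoint _ _ hij := hA.pairwise_disjoint (e.injective.ne hij)
  iUnion_eq_univ := (e.surjective.iUnion_comp A).trans hA.iUnion_eq_univ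

lemma preimage (hA : IsMeasurablePartition A) {T : X → X} (hT : Measurable T) :
    IsMeasurablePartition fun i => T ⁻¹' A i where
  measurableSet i := hT (hA.measurableSet i)
  pairwise_disjoint _ _ hij := (hA.pairwise_disjoint hij).preimage T
  iUnion_eq_univ := by rw [← Set.preimage_iUnion, hA.iUnion_eq_univ, Set.preimage_univ]

lemma inter (hA : IsMeasurablePartition A) (hB : IsMeasurablePartition B) :
    IsMeasurablePartition fun q : ι × κ => A q.1 ∩ B q.2 where
  measurableSet q := (hA.measurableSet q.1).inter (hB.measurableSet q.2)
  pairwise_disjoint q q' hqq' := by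
    by_cases h : q.1 = q'.1
    · exact (hB.pairwise_disjoint fun h' => hqq' (Prod.ext h h')).mono
        Set.inter_subset_right Set.inter_subset_right
    · exact (hA.pairwise_disjoint h).mono Set.inter_subset_left Set.inter_subset_left
  iUnion_eq_univ := Set.eq_univ_of_forall fun x => by
    obtain ⟨i, hi⟩ := hA.exists_mem x
    obtain ⟨j, hj⟩ := hB.exists_mem x
    exact Set.mem_iUnion.2 ⟨(i, j), hi, hj⟩

lemma measureReal_eq_sum_inter [Fintype κ] (hB : IsMeasurablePartition B) (m : Measure X)
    [IsFiniteMeasure m] {s : Set X} (hs : MeasurableSet s) :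
    m.real s = ∑ j, m.real (s ∩ B j) := by
  rw [← measureReal_biUnion_finset
    (fun i _ j _ hij => (hB.pairwise_disjoint hij).mono Set.inter_subset_right
      Set.inter_subset_right) (fun j _ => hs.inter (hB.measurableSet j))]
  simp [← Set.inter_iUnion, hB.iUnion_eq_univ]

lemma sum_measureReal_eq_one [Fintype ι] (hA : IsMeasurablePartition A) (m : Measure X)
    [IsProbabilityMeasure m] : ∑ i, m.real (A i) = 1 := by
  simpa using (hA.measureReal_eq_sum_inter m MeasurableSet.univ).symm

end IsMeasurablePartition

end Partition

section StaticEntropy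

variable {X : Type*} [MeasurableSpace X] {ι κ τ : Type*} [Fintype ι] [Fintype κ] [Fintype τ]
  {m : Measure X} {A : ι → Set X} {B : κ → Set X}

lemma partH_eq_sum_measureReal (m : Measure X) (A : ι → Set X) :
    partH m A = ∑ i, Real.negMulLog (m.real (A i)) := rfl

lemma partH_nonneg (m : Measure X) [IsProbabilityMeasure m] (A : ι → Set X) :
    0 ≤ partH m A :=
  sum_nonneg fun _ _ => Real.negMulLog_nonneg measureReal_nonneg measureReal_le_one

lemma partH_comp_equiv (m : Measure X) (A : ι → Set X) (e : κ ≃ ι) :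
    partH m (A ∘ e) = partH m A :=
  Fintype.sum_equiv e _ _ fun _ => rfl

lemma partH_map {T : X → X} (hT : Measurable T) (hA : ∀ i, MeasurableSet (A i)) :
    partH (m.map T) A = partH m fun i => T ⁻¹' A i := by
  simp only [partH_eq_sum_measureReal, map_measureReal_apply hT (hA _)]

lemma partH_le_log_card [IsProbabilityMeasure m] (hA : IsMeasurablePartition A) :
    partH m A ≤ Real.log (Fintype.card ι) := by
  rcases isEmpty_or_nonempty ι with hι | hι
  · simp [partH]
  have hcard : (0 : ℝ) < Fintype.card ι := by exact_mod_cast Fintype.card_pos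
  have hJensen := Real.concaveOn_negMulLog.le_map_sum (t := univ)
    (w := fun _ => (Fintype.card ι : ℝ)⁻¹) (p := fun i => m.real (A i))
    (fun _ _ => by positivity) (by simp [hcard.ne']) (fun _ _ => measureReal_nonneg)
  simp only [smul_eq_mul, ← mul_sum, hA.sum_measureReal_eq_one, mul_one] at hJensen
  rw [Real.negMulLog, Real.log_inv] at hJensen
  rw [partH_eq_sum_measureReal]
  have := mul_le_mul_of_nonneg_left hJensen hcard.le
  field_simp at this
  linarith

lemma partH_le_of_subset [IsFiniteMeasure m] {D : τ → Set X} (hA : Pairwise (Disjoint on A))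
    (hD : IsMeasurablePartition D) (π : τ → ι) (hDA : ∀ t, D t ⊆ A (π t)) :
    partH m A ≤ partH m D := by
  classical
  have hcell : ∀ i, A i = ⋃ t ∈ univ.filter (π · = i), D t := by
    intro i
    refine Set.Subset.antisymm (fun x hx => ?_) (Set.iUnion₂_subset fun t ht => ?_)
    · obtain ⟨t, ht⟩ := hD.exists_mem x
      have hti : π t = i := by_contra fun h => Set.disjoint_left.1 (hA h) (hDA t ht) hx
      exact Set.mem_biUnion (mem_filter.2 ⟨mem_univ t, hti⟩) ht
    · exact (mem_filter.1 ht).2 ▸ hDA t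
  have hmass : ∀ i, m.real (A i) = ∑ t ∈ univ.filter (π · = i), m.real (D t) := fun i => by
    rw [hcell i, measureReal_biUnion_finset (fun s _ t _ hst => hD.pairwise_disjoint hst)
      (fun t _ => hD.measurableSet t)]
  calc partH m A = ∑ i, Real.negMulLog (∑ t ∈ univ.filter (π · = i), m.real (D t)) := by
        simp only [partH_eq_sum_measureReal, hmass]
    _ ≤ ∑ i, ∑ t ∈ univ.filter (π · = i), Real.negMulLog (m.real (D t)) :=
        sum_le_sum fun i _ => Real.negMulLog_sum_le _ fun _ _ => measureReal_nonneg
    _ = partH m D := sum_fiberwise _ _ _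

lemma partH_inter_le_add [IsProbabilityMeasure m] (hA : IsMeasurablePartition A)
    (hB : IsMeasurablePartition B) :
    partH m (fun q : ι × κ => A q.1 ∩ B q.2) ≤ partH m A + partH m B := by
  have hrow : ∀ i, m.real (A i) = ∑ j, m.real (A i ∩ B j) := fun i =>
    hB.measureReal_eq_sum_inter m (hA.measurableSet i)
  have hcol : ∀ j, m.real (B j) = ∑ i, m.real (A i ∩ B j) := fun j => by
    simp only [Set.inter_comm (A _)]
    exact hA.measureReal_eq_sum_inter m (hB.measurableSet j)
  have htotal : ∑ i, ∑ j, m.real (A i ∩ B j) = 1 := by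
    simp only [← hrow, hA.sum_measureReal_eq_one]
  rw [partH_eq_sum_measureReal, Fintype.sum_prod_type]
  simpa only [partH_eq_sum_measureReal, hrow, hcol] using
    Real.sum_sum_negMulLog_le (fun _ _ => measureReal_nonneg) htotal

end StaticEntropy

section Average

variable {X : Type*} [MeasurableSpace X] {ι κ : Type*} [Fintype κ] {A : κ → Set X}
  {s : Finset ι} {μs : ι → Measure X}

lemma measureReal_average [∀ i, IsFiniteMeasure (μs i)] (B : Set X) :
    ((#s : ℝ≥0∞)⁻¹ • ∑ i ∈ s, μs i).real B = (#s : ℝ)⁻¹ * ∑ i ∈ s, (μs i).real B := by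
  simp [measureReal_def, ENNReal.toReal_sum (fun i _ => measure_ne_top (μs i) B)]

lemma abs_partH_average_sub_le [∀ i, IsProbabilityMeasure (μs i)] (hs : s.Nonempty)
    (hA : IsMeasurablePartition A) :
    |partH ((#s : ℝ≥0∞)⁻¹ • ∑ i ∈ s, μs i) A - (#s : ℝ)⁻¹ * ∑ i ∈ s, partH (μs i) A|
      ≤ Real.log #s := by
  have hcard : (0 : ℝ) < #s := by exact_mod_cast hs.card_pos
  have hpartH : partH ((#s : ℝ≥0∞)⁻¹ • ∑ i ∈ s, μs i) A =
      ∑ S, Real.negMulLog (∑ i ∈ s, (#s : ℝ)⁻¹ * (μs i).real (A S)) := by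
    simp only [partH_eq_sum_measureReal, measureReal_average, mul_sum]
  have havg : (#s : ℝ)⁻¹ * ∑ i ∈ s, partH (μs i) A =
      ∑ S, ∑ i ∈ s, (#s : ℝ)⁻¹ * Real.negMulLog ((μs i).real (A S)) := by
    simp only [partH_eq_sum_measureReal, mul_sum]
    exact Finset.sum_comm
  rw [abs_sub_le_iff, hpartH, havg]
  constructor
  · have hcell : ∀ S, Real.negMulLog (∑ i ∈ s, (#s : ℝ)⁻¹ * (μs i).real (A S)) ≤
        ∑ i ∈ s, ((μs i).real (A S) * Real.negMulLog (#s : ℝ)⁻¹ +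
          (#s : ℝ)⁻¹ * Real.negMulLog ((μs i).real (A S))) := fun S => by
      simpa only [Real.negMulLog_mul] using
        Real.negMulLog_sum_le s fun i _ => mul_nonneg (by positivity) measureReal_nonneg
    have hweights : ∑ S, ∑ i ∈ s, (μs i).real (A S) * Real.negMulLog (#s : ℝ)⁻¹ =
        Real.log #s := by
      rw [Finset.sum_comm]
      simp only [← sum_mul, hA.sum_measureReal_eq_one, one_mul, sum_const, nsmul_eq_mul,
        Real.negMulLog, Real.log_inv]
      field_simp
    have := sum_le_sum fun S (_ : S ∈ univ) => hcell S
    rw [sum_congr rfl fun S _ => sum_add_distrib, sum_add_distrib, hweights] at this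
    linarith
  · refine sub_nonpos.2 (sum_le_sum fun S _ => ?_) |>.trans (Real.log_nonneg ?_)
    · have := Real.concaveOn_negMulLog.le_map_sum (t := s) (w := fun _ => (#s : ℝ)⁻¹)
        (p := fun i => (μs i).real (A S)) (fun _ _ => by positivity)
        (by simp [hcard.ne']) (fun _ _ => measureReal_nonneg)
      simpa only [smul_eq_mul] using this
    · exact_mod_cast hs.card_pos

end Average

section Join

variable {X : Type*} {k : ℕ}

lemma joinPart_add_append (T : X → X) (P : Fin k → Set X) {a b : ℕ} (s : Fin a → Fin k)
    (t : Fin b → Fin k) :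
    joinPart T P (a + b) (Fin.append s t) = joinPart T P a s ∩ T^[a] ⁻¹' joinPart T P b t := by
  ext x
  simp only [joinPart, Set.mem_inter_iff, Set.mem_iInter, Set.mem_preimage, Fin.forall_fin_add,
    Fin.append_left, Fin.append_right, Fin.val_castAdd, Fin.val_natAdd, add_comm a,
    Function.iterate_add_apply]

variable [MeasurableSpace X]

lemma partH_joinPart_add (m : Measure X) (T : X → X) (P : Fin k → Set X) (a b : ℕ) :
    partH m (joinPart T P (a + b)) =
      partH m fun q : (Fin a → Fin k) × (Fin b → Fin k) =>
        joinPart T P a q.1 ∩ T^[a] ⁻¹' joinPart T P b q.2 := by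
  rw [← partH_comp_equiv m _ (Fin.appendEquiv a b)]
  congr 1
  funext q
  exact joinPart_add_append T P q.1 q.2

variable {T : X → X} {P : Fin k → Set X} {m : Measure X}

lemma isMeasurablePartition_joinPart (hT : Measurable T) (hP : IsMeasurablePartition P)
    (n : ℕ) : IsMeasurablePartition (joinPart T P n) where
  measurableSet s := MeasurableSet.iInter fun j => hT.iterate j (hP.measurableSet (s j))
  pairwise_disjoint s s' hss' := by
    obtain ⟨j, hj⟩ := Function.ne_iff.1 hss'
    exact ((hP.pairwise_disjoint hj).preimage _).mono
      (Set.iInter_subset _ j) (Set.iInter_subset _ j)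
  iUnion_eq_univ := Set.eq_univ_of_forall fun x => by
    choose c hc using fun j : Fin n => hP.exists_mem (T^[j] x)
    exact Set.mem_iUnion.2 ⟨c, Set.mem_iInter.2 hc⟩

lemma partH_joinPart_le [IsProbabilityMeasure m] (hT : Measurable T)
    (hP : IsMeasurablePartition P) (n : ℕ) :
    partH m (joinPart T P n) ≤ n * Real.log k := by
  refine (partH_le_log_card (isMeasurablePartition_joinPart hT hP n)).trans_eq ?_
  simp [Real.log_pow]

variable (hT : Measurable T) (hP : IsMeasurablePartition P)
include hT hP

lemma partH_joinPart_add_le [IsProbabilityMeasure m] (a b : ℕ) :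
    partH m (joinPart T P (a + b)) ≤
      partH m (joinPart T P a) + partH (m.map T^[a]) (joinPart T P b) := by
  have hPb := isMeasurablePartition_joinPart hT hP b
  rw [partH_joinPart_add, partH_map (hT.iterate a) hPb.measurableSet]
  have hinter := partH_inter_le_add (m := m) (isMeasurablePartition_joinPart hT hP a)
    (hPb.preimage (hT.iterate a))
  exact hinter

lemma partH_joinPart_le_partH_joinPart_add [IsFiniteMeasure m] (a b : ℕ) :
    partH m (joinPart T P a) ≤ partH m (joinPart T P (a + b)) := by
  rw [partH_joinPart_add]
  exact partH_le_of_subset (isMeasurablePartition_joinPart hT hP a).pairwise_disjoint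
    ((isMeasurablePartition_joinPart hT hP a).inter
      ((isMeasurablePartition_joinPart hT hP b).preimage (hT.iterate a)))
    Prod.fst fun _ => Set.inter_subset_left

lemma partH_map_joinPart_le_partH_joinPart_add [IsFiniteMeasure m] (a b : ℕ) :
    partH (m.map T^[a]) (joinPart T P b) ≤ partH m (joinPart T P (a + b)) := by
  have hPb := isMeasurablePartition_joinPart hT hP b
  rw [partH_joinPart_add, partH_map (hT.iterate a) hPb.measurableSet]
  exact partH_le_of_subset (hPb.preimage (hT.iterate a)).pairwise_disjoint
    ((isMeasurablePartition_joinPart hT hP a).inter (hPb.preimage (hT.iterate a)))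
    Prod.snd fun _ => Set.inter_subset_right

/-- The two joins differ by a window of length `i`, whose entropy is at most `i * log k`. -/
lemma abs_partH_map_iterate_joinPart_sub_le [IsProbabilityMeasure m] (i n : ℕ) :
    |partH (m.map T^[i]) (joinPart T P n) - partH m (joinPart T P n)| ≤ i * Real.log k := by
  have := Measure.isProbabilityMeasure_map (μ := m) (hT.iterate n).aemeasurable
  have h₁ := partH_map_joinPart_le_partH_joinPart_add hT hP (m := m) i n
  have h₂ := partH_joinPart_add_le hT hP (m := m) i n
  have h₃ := partH_joinPart_le_partH_joinPart_add hT hP (m := m) n i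
  have h₄ := partH_joinPart_add_le hT hP (m := m) n i
  have h₅ := partH_joinPart_le hT hP (m := m) i
  have h₆ := partH_joinPart_le hT hP (m := m.map T^[n]) i
  rw [add_comm n i] at h₃ h₄
  rw [abs_sub_le_iff]
  constructor <;> linarith

end Join

lemma tendsto_div_natCast_of_abs_sub_le {u v : ℕ → ℝ} {a C : ℝ}
    (hu : Tendsto (fun n => u n / n) atTop (𝓝 a)) (huv : ∀ n, |v n - u n| ≤ C) :
    Tendsto (fun n => v n / n) atTop (𝓝 a) := by
  refine hu.congr_dist (squeeze_zero (fun _ => dist_nonneg) (fun n => ?_)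
    (tendsto_const_div_atTop_nhds_zero_nat C))
  rw [Real.dist_eq, ← sub_div, abs_div, Nat.abs_cast, abs_sub_comm]
  exact div_le_div_of_nonneg_right (huv n) n.cast_nonneg

section DynamicalEntropy

variable {X : Type*} [MeasurableSpace X] {T : X → X} {k : ℕ} {P : Fin k → Set X}
  {m : Measure X} [IsProbabilityMeasure m]

lemma tendsto_partH_joinPart_div (hT : MeasurePreserving T m m) (hP : IsMeasurablePartition P) :
    Tendsto (fun n : ℕ => partH m (joinPart T P n) / n) atTop (𝓝 (entropyOfPart m T P)) := by
  have hsub : Subadditive fun n => partH m (joinPart T P n) := fun a b => by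
    simpa only [(hT.iterate a).map_eq] using partH_joinPart_add_le hT.measurable hP (m := m) a b
  have hbdd : BddBelow (Set.range fun n : ℕ => partH m (joinPart T P n) / n) :=
    ⟨0, Set.forall_mem_range.2 fun n => div_nonneg (partH_nonneg m _) n.cast_nonneg⟩
  have hlim := hsub.tendsto_lim hbdd
  suffices entropyOfPart m T P = hsub.lim by rwa [this]
  refine le_antisymm (ge_of_tendsto ((tendsto_add_atTop_iff_nat 1).2 hlim)
    (Eventually.of_forall fun n => ?_)) (le_ciInf fun n => ?_)
  · have hbdd' : BddBelow (Set.range fun n : ℕ => partH m (joinPart T P (n + 1)) / (n + 1)) :=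
      ⟨0, Set.forall_mem_range.2 fun n => div_nonneg (partH_nonneg m _) n.cast_add_one_pos.le⟩
    rw [entropyOfPart]
    exact_mod_cast ciInf_le hbdd' n
  · exact_mod_cast hsub.lim_le_div hbdd n.succ_ne_zero

end DynamicalEntropy

lemma Finset.sum_range_succ_eq_sum_range_of_eq {M : Type*} [AddCommMonoid M] {g : ℕ → M}
    {L : ℕ} (hg : g L = g 0) : ∑ i ∈ range L, g (i + 1) = ∑ i ∈ range L, g i := by
  cases L with
  | zero => simp
  | succ L => rw [sum_range_succ, hg, sum_range_succ']

section IterateAverage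

variable {X : Type*} [MeasurableSpace X]

noncomputable def iterateAverage (T : X → X) (L : ℕ) (μ : Measure X) : Measure X :=
  (L : ℝ≥0∞)⁻¹ • ∑ i ∈ range L, μ.map T^[i]

variable {T : X → X} {L : ℕ} {μ : Measure X}

lemma isProbabilityMeasure_iterateAverage [IsProbabilityMeasure μ] (hT : Measurable T)
    (hL : 0 < L) : IsProbabilityMeasure (iterateAverage T L μ) := by
  have := fun i => Measure.isProbabilityMeasure_map (μ := μ) (hT.iterate i).aemeasurable
  constructor
  simp [iterateAverage, ENNReal.inv_mul_cancel (Nat.cast_ne_zero.2 hL.ne')]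

lemma iterateAverage_apply_of_preimage_eq (hT : Measurable T) (hL : 0 < L) {s : Set X}
    (hs : MeasurableSet s) (hTs : T ⁻¹' s = s) : iterateAverage T L μ s = μ s := by
  have hiter : ∀ i, T^[i] ⁻¹' s = s := Function.IsFixedPt.preimage_iterate hTs
  simp [iterateAverage, Measure.map_apply (hT.iterate _) hs, hiter, ← mul_assoc,
    ENNReal.inv_mul_cancel (Nat.cast_ne_zero.2 hL.ne')]

lemma measurePreserving_iterateAverage (hT : Measurable T) (hTL : MeasurePreserving T^[L] μ μ) :
    MeasurePreserving T (iterateAverage T L μ) (iterateAverage T L μ) := by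
  refine ⟨hT, Measure.ext fun s hs => ?_⟩
  have hshift := Finset.sum_range_succ_eq_sum_range_of_eq (g := fun i => μ (T^[i] ⁻¹' s))
    (by simpa using hTL.measure_preimage hs.nullMeasurableSet)
  simp only [Measure.map_apply hT hs, iterateAverage, Measure.smul_apply, Measure.coe_finsetSum,
    Finset.sum_apply, Measure.map_apply (hT.iterate _) hs,
    Measure.map_apply (hT.iterate _) (hT hs), ← Set.preimage_comp, ← Function.iterate_succ',
    smul_eq_mul, hshift]

lemma ergodic_iterateAverage (hT : Measurable T) (hL : 0 < L) (hμ : Ergodic T^[L] μ) :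
    Ergodic T (iterateAverage T L μ) := by
  refine ⟨measurePreserving_iterateAverage hT hμ.toMeasurePreserving, ⟨fun s hs hTs => ?_⟩⟩
  have hsc : T ⁻¹' sᶜ = sᶜ := by rw [Set.preimage_compl, hTs]
  rw [eventuallyConst_set', ae_eq_empty, ae_eq_univ,
    iterateAverage_apply_of_preimage_eq hT hL hs hTs,
    iterateAverage_apply_of_preimage_eq hT hL hs.compl hsc]
  exact (PreErgodic.of_iterate L hμ.toPreErgodic).measure_self_or_compl_eq_zero hs hTs

end IterateAverage

section EntropyOfAverage

variable {X : Type*} [MeasurableSpace X] {T : X → X} {L k : ℕ} {P : Fin k → Set X}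
  {μ : Measure X} [IsProbabilityMeasure μ]

lemma abs_partH_iterateAverage_joinPart_sub_le (hT : Measurable T) (hL : 0 < L)
    (hP : IsMeasurablePartition P) (n : ℕ) :
    |partH (iterateAverage T L μ) (joinPart T P n) - partH μ (joinPart T P n)| ≤
      Real.log L + L * Real.log k := by
  have := fun i => Measure.isProbabilityMeasure_map (μ := μ) (hT.iterate i).aemeasurable
  have hPn := isMeasurablePartition_joinPart hT hP n
  have havg := abs_partH_average_sub_le (s := range L) (μs := fun i => μ.map T^[i])
    (nonempty_range_iff.2 hL.ne') hPn
  rw [card_range] at havg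
  have hL' : (0 : ℝ) < L := by exact_mod_cast hL
  have hshift : |(L : ℝ)⁻¹ * ∑ i ∈ range L, partH (μ.map T^[i]) (joinPart T P n) -
      partH μ (joinPart T P n)| ≤ L * Real.log k := by
    have hsum : ∑ i ∈ range L, |partH (μ.map T^[i]) (joinPart T P n) -
        partH μ (joinPart T P n)| ≤ ∑ _i ∈ range L, L * Real.log k := by
      refine sum_le_sum fun i hi => (abs_partH_map_iterate_joinPart_sub_le hT hP i n).trans ?_
      gcongr
      exact (mem_range.1 hi).le
    rw [sum_const, card_range, nsmul_eq_mul] at hsum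
    have hmean : (L : ℝ)⁻¹ * ∑ i ∈ range L, partH (μ.map T^[i]) (joinPart T P n) -
        partH μ (joinPart T P n) = (L : ℝ)⁻¹ * ∑ i ∈ range L,
          (partH (μ.map T^[i]) (joinPart T P n) - partH μ (joinPart T P n)) := by
      rw [sum_sub_distrib, sum_const, card_range, nsmul_eq_mul]
      field_simp
    rw [hmean, abs_mul, abs_of_pos (inv_pos.2 hL')]
    calc (L : ℝ)⁻¹ * |∑ i ∈ range L,
          (partH (μ.map T^[i]) (joinPart T P n) - partH μ (joinPart T P n))|
        ≤ (L : ℝ)⁻¹ * (L * (L * Real.log k)) := by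
          gcongr
          exact (abs_sum_le_sum_abs _ _).trans hsum
      _ = L * Real.log k := by field_simp
  exact (abs_sub_le _ _ _).trans (add_le_add havg hshift)

lemma tendsto_partH_joinPart_div_iterateAverage (hT : Measurable T) (hL : 0 < L)
    (hTL : MeasurePreserving T^[L] μ μ) (hP : IsMeasurablePartition P) :
    Tendsto (fun n : ℕ => partH μ (joinPart T P n) / n) atTop
      (𝓝 (entropyOfPart (iterateAverage T L μ) T P)) := by
  have := isProbabilityMeasure_iterateAverage (μ := μ) hT hL
  refine tendsto_div_natCast_of_abs_sub_le (C := Real.log L + L * Real.log k)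
    (tendsto_partH_joinPart_div (measurePreserving_iterateAverage hT hTL) hP) fun n => ?_
  rw [abs_sub_comm]
  exact abs_partH_iterateAverage_joinPart_sub_le hT hL hP n

end EntropyOfAverage

section Power

variable {X : Type*} {k : ℕ}

def joinPartFin (T : X → X) (P : Fin k → Set X) (n : ℕ) : Fin (k ^ n) → Set X :=
  joinPart T P n ∘ finFunctionFinEquiv.symm

/-- Reads a word of `n` letters from `Fin (k ^ L)` as `n` blocks of `L` letters from `Fin k`. -/
def blockEquiv (k n L : ℕ) : (Fin n → Fin (k ^ L)) ≃ (Fin (n * L) → Fin k) :=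
  ((Equiv.refl _).arrowCongr finFunctionFinEquiv.symm).trans <|
    (Equiv.curry _ _ _).symm.trans (finProdFinEquiv.arrowCongr (Equiv.refl _))

lemma joinPart_iterate_joinPartFin (T : X → X) (P : Fin k → Set X) (L n : ℕ)
    (s : Fin n → Fin (k ^ L)) :
    joinPart T^[L] (joinPartFin T P L) n s = joinPart T P (n * L) (blockEquiv k n L s) := by
  ext x
  simp only [joinPart, joinPartFin, blockEquiv, Set.mem_iInter, Set.mem_preimage,
    Function.comp_apply, Equiv.trans_apply, Equiv.arrowCongr_apply]
  rw [← finProdFinEquiv.forall_congr_right]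
  simp only [Equiv.symm_apply_apply, Equiv.curry_symm_apply, Equiv.refl_apply,
    finProdFinEquiv_apply_val, iterate_add_apply, iterate_mul, Prod.forall, uncurry_apply_pair,
    Equiv.arrowCongr_apply, Equiv.refl_symm, Equiv.coe_refl, CompTriple.comp_eq, comp_apply]

variable [MeasurableSpace X] {T : X → X} {P : Fin k → Set X} {m : Measure X}

lemma isMeasurablePartition_joinPartFin (hT : Measurable T) (hP : IsMeasurablePartition P)
    (n : ℕ) : IsMeasurablePartition (joinPartFin T P n) :=
  (isMeasurablePartition_joinPart hT hP n).comp_equiv _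

lemma partH_joinPart_iterate_joinPartFin (m : Measure X) (L n : ℕ) :
    partH m (joinPart T^[L] (joinPartFin T P L) n) = partH m (joinPart T P (n * L)) := by
  rw [← partH_comp_equiv m (joinPart T P (n * L)) (blockEquiv k n L)]
  exact congrArg _ (funext (joinPart_iterate_joinPartFin T P L n))

lemma partH_joinPart_iterate_le [IsFiniteMeasure m] (hT : Measurable T)
    (hP : IsMeasurablePartition P) {L : ℕ} (hL : 0 < L) (n : ℕ) :
    partH m (joinPart T^[L] P n) ≤ partH m (joinPart T P (n * L)) := by
  refine partH_le_of_subset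
    (isMeasurablePartition_joinPart (hT.iterate L) hP n).pairwise_disjoint
    (isMeasurablePartition_joinPart hT hP (n * L))
    (fun σ j => σ (finProdFinEquiv (j, ⟨0, hL⟩))) fun σ x hx => ?_
  simp only [joinPart, Set.mem_iInter, Set.mem_preimage] at hx ⊢
  intro j
  simpa [← Function.iterate_mul] using hx (finProdFinEquiv (j, ⟨0, hL⟩))

end Power

section EntropyOfIterate

variable {X : Type*} [MeasurableSpace X] {T : X → X} {L k : ℕ} {μ : Measure X}
  [IsProbabilityMeasure μ] (hT : Measurable T) (hL : 0 < L) (hTL : MeasurePreserving T^[L] μ μ)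
include hT hL hTL

lemma tendsto_partH_joinPart_mul_div {P : Fin k → Set X} (hP : IsMeasurablePartition P) :
    Tendsto (fun n : ℕ => partH μ (joinPart T P (n * L)) / n) atTop
      (𝓝 (L * entropyOfPart (iterateAverage T L μ) T P)) := by
  have hmul : Tendsto (· * L) atTop atTop :=
    tendsto_atTop_mono (fun n => Nat.le_mul_of_pos_right n hL) tendsto_id
  refine (((tendsto_partH_joinPart_div_iterateAverage hT hL hTL hP).comp hmul).const_mul
    (L : ℝ)).congr fun n => ?_
  have hL' : (L : ℝ) ≠ 0 := by exact_mod_cast hL.ne'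
  simp only [Function.comp_apply, Nat.cast_mul, mul_div_assoc', mul_comm (n : ℝ),
    mul_div_mul_left _ _ hL']

lemma entropyOfPart_iterate_joinPartFin {P : Fin k → Set X} (hP : IsMeasurablePartition P) :
    entropyOfPart μ T^[L] (joinPartFin T P L) = L * entropyOfPart (iterateAverage T L μ) T P :=
  tendsto_nhds_unique
    (by simpa only [partH_joinPart_iterate_joinPartFin] using
      tendsto_partH_joinPart_div hTL (isMeasurablePartition_joinPartFin hT hP L))
    (tendsto_partH_joinPart_mul_div hT hL hTL hP)

lemma entropyOfPart_iterate_le {Q : Fin k → Set X} (hQ : IsMeasurablePartition Q) :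
    entropyOfPart μ T^[L] Q ≤ L * entropyOfPart (iterateAverage T L μ) T Q :=
  le_of_tendsto_of_tendsto' (tendsto_partH_joinPart_div hTL hQ)
    (tendsto_partH_joinPart_mul_div hT hL hTL hQ) fun n =>
      div_le_div_of_nonneg_right (partH_joinPart_iterate_le hT hQ hL n) n.cast_nonneg

end EntropyOfIterate

section KolmogorovSinai

variable {X : Type*} [MeasurableSpace X] {T : X → X} {m : Measure X}

lemma le_metricEntropy {k : ℕ} {P : Fin k → Set X} (hP : IsMeasurablePartition P) :
    ENNReal.ofReal (entropyOfPart m T P) ≤ metricEntropy m T :=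
  le_iSup₂_of_le k P <|
    le_iSup_of_le ⟨hP.measurableSet, hP.pairwise_disjoint, hP.iUnion_eq_univ⟩ le_rfl

lemma metricEntropy_le {c : ℝ≥0∞} (h : ∀ (k : ℕ) (P : Fin k → Set X),
    IsMeasurablePartition P → ENNReal.ofReal (entropyOfPart m T P) ≤ c) :
    metricEntropy m T ≤ c :=
  iSup₂_le fun k P => iSup_le fun hP => h k P ⟨hP.1, hP.2.1, hP.2.2⟩

lemma metricEntropy_iterateAverage {L : ℕ} [IsProbabilityMeasure m] (hT : Measurable T)
    (hL : 0 < L) (hTL : MeasurePreserving T^[L] m m) :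
    metricEntropy (iterateAverage T L m) T = (L : ℝ≥0∞)⁻¹ * metricEntropy m T^[L] := by
  have hL₀ : (L : ℝ≥0∞) ≠ 0 := Nat.cast_ne_zero.2 hL.ne'
  have hofReal : ∀ x : ℝ, ENNReal.ofReal (L * x) = L * ENNReal.ofReal x := fun x => by
    rw [ENNReal.ofReal_mul (Nat.cast_nonneg L), ENNReal.ofReal_natCast]
  apply le_antisymm
  · refine metricEntropy_le fun k P hP => ?_
    calc ENNReal.ofReal (entropyOfPart (iterateAverage T L m) T P)
        = (L : ℝ≥0∞)⁻¹ * ENNReal.ofReal (L * entropyOfPart (iterateAverage T L m) T P) := by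
          rw [hofReal, ← mul_assoc, ENNReal.inv_mul_cancel hL₀ (ENNReal.natCast_ne_top L),
            one_mul]
      _ ≤ (L : ℝ≥0∞)⁻¹ * metricEntropy m T^[L] := by
          rw [← entropyOfPart_iterate_joinPartFin hT hL hTL hP]
          gcongr
          exact le_metricEntropy (isMeasurablePartition_joinPartFin hT hP L)
  · rw [ENNReal.inv_mul_le_iff hL₀ (ENNReal.natCast_ne_top L)]
    refine metricEntropy_le fun k Q hQ => ?_
    calc ENNReal.ofReal (entropyOfPart m T^[L] Q)
        ≤ ENNReal.ofReal (L * entropyOfPart (iterateAverage T L m) T Q) :=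
          ENNReal.ofReal_le_ofReal (entropyOfPart_iterate_le hT hL hTL hQ)
      _ ≤ L * metricEntropy (iterateAverage T L m) T := by
          rw [hofReal]
          gcongr
          exact le_metricEntropy hQ

end KolmogorovSinai

theorem average_measure_ergodic_entropy_general
    {X : Type*} [MetricSpace X] [MeasurableSpace X] [BorelSpace X]
    (f : X → X) (hf : Continuous f) (L : ℕ) (hL : 0 < L)
    (μ : Measure X) [IsProbabilityMeasure μ] (hμ : Ergodic f^[L] μ)
    (ν : Measure X)
    (hν : ν = (L : ℝ≥0∞)⁻¹ • ∑ i ∈ Finset.range L, Measure.map f^[i] μ) :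
    IsProbabilityMeasure ν ∧ Ergodic f ν ∧
      metricEntropy ν f = (L : ℝ≥0∞)⁻¹ * metricEntropy μ f^[L] := by
  subst hν
  exact ⟨isProbabilityMeasure_iterateAverage hf.measurable hL,
    ergodic_iterateAverage hf.measurable hL hμ,
    metricEntropy_iterateAverage hf.measurable hL hμ.toMeasurePreserving⟩

/-- If `μ` is an ergodic `f^L`-invariant Borel probability measure and
`ν := (1/L) ∑_{i=0}^{L-1} μ ∘ f^{-i}`, then `ν` is an `f`-invariant (indeed ergodic)
Borel probability measure and `h_ν(f) = (1/L)·h_μ(f^L)`. -/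
theorem average_measure_ergodic_entropy
    {X : Type*} [MetricSpace X] [CompactSpace X] [MeasurableSpace X] [BorelSpace X]
    (f : X → X) (hf : Continuous f) (L : ℕ) (hL : 0 < L)
    (μ : Measure X) [IsProbabilityMeasure μ] (hμ : Ergodic f^[L] μ)
    (ν : Measure X)
    (hν : ν = (L : ℝ≥0∞)⁻¹ • ∑ i ∈ Finset.range L, Measure.map f^[i] μ) :
    IsProbabilityMeasure ν ∧ Ergodic f ν ∧
      metricEntropy ν f = (L : ℝ≥0∞)⁻¹ * metricEntropy μ f^[L] :=
  average_measure_ergodic_entropy_general f hf L hL μ hμ ν hν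
end

section
/- Let (X,f) be a dynamical system and L∈ℕ⁺. Suppose there exists a compact set Y⊂X with f^L(Y)⊂Y such that (Y,f^L) satisfies the shadowing property, X = ⋃_{i=0}^{L−1} f^i(Y), and f^i(Y) ∩ f^j(Y) = ∅ for all 0 ≤ i < j ≤ L−1. Then (X,f) satisfies the shadowing property. -/
/-!
The pieces `f^[i] '' Y`, `i < L`, are compact, pairwise disjoint and cover `X`, hence clopen and
a uniform distance `η > 0` apart. As `f` maps each piece into the next one (cyclically), an
`η`-pseudo-orbit runs through the pieces in the same cyclic order as true orbits do.

A pseudo-orbit `x` with `x 0 = f^[i] y`, `y ∈ Y`, is first extended backwards by the true orbit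
segment `y, f y, …, f^[i-1] y`; the extended sequence lies in `Y` at all multiples of `L`. Since
stretches of length `L` of a fine pseudo-orbit of the uniformly continuous `f` stay close to true
orbits, its values at multiples of `L` form a pseudo-orbit of `f^[L]` in `Y`, which is shadowed
by some `z ∈ Y`; uniform continuity of `f^[r]`, `r < L`, fills in the intermediate times, and
`f^[i] z` shadows `x`.
-/

/-- The shadowing property for the restriction of a map `f` to a subset `S`:
every `δ`-pseudo-orbit contained in `S` is `ε`-traced by a point of `S`. -/
def HasShadowingOn {X : Type*} [MetricSpace X] (f : X → X) (S : Set X) : Prop :=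
  ∀ ε : ℝ, 0 < ε → ∃ δ : ℝ, 0 < δ ∧
    ∀ x : ℕ → X, (∀ n, x n ∈ S) → (∀ n, dist (f (x n)) (x (n + 1)) < δ) →
      ∃ z ∈ S, ∀ n, dist (f^[n] z) (x n) < ε

open Set Function Filter Metric

section Iterates

variable {α : Type*} {f : α → α}

theorem image_iterate_subset_image_iterate_mod {Y : Set α} {L : ℕ} (hY : MapsTo f^[L] Y Y)
    (m : ℕ) : f^[m] '' Y ⊆ f^[m % L] '' Y := by
  rintro _ ⟨y, hy, rfl⟩
  refine ⟨(f^[L])^[m / L] y, hY.iterate _ hy, ?_⟩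
  rw [← iterate_mul, ← iterate_add_apply, Nat.mod_add_div]

theorem mapsTo_image_iterate_mod {Y : Set α} {L : ℕ} (hY : MapsTo f^[L] Y Y) (n : ℕ) :
    MapsTo f (f^[n % L] '' Y) (f^[(n + 1) % L] '' Y) := by
  rintro _ ⟨y, hy, rfl⟩
  rw [← Nat.mod_add_mod, ← iterate_succ_apply' f]
  exact image_iterate_subset_image_iterate_mod hY _ ⟨y, hy, rfl⟩

def prependOrbit (f : α → α) (y : α) (i : ℕ) (x : ℕ → α) (n : ℕ) : α :=
  if n < i then f^[n] y else x (n - i)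

theorem prependOrbit_add (y : α) (i : ℕ) (x : ℕ → α) (n : ℕ) :
    prependOrbit f y i x (n + i) = x n := by
  simp [prependOrbit]

theorem prependOrbit_of_le {y : α} {i : ℕ} {x : ℕ → α} (hy : x 0 = f^[i] y) {n : ℕ}
    (hn : n ≤ i) : prependOrbit f y i x n = f^[n] y := by
  rcases hn.lt_or_eq with hn | rfl
  · simp [prependOrbit, hn]
  · simpa using prependOrbit_add (f := f) y n x 0 |>.trans hy

end Iterates

section PseudoOrbit

variable {X : Type*} [PseudoMetricSpace X] {f : X → X}

def IsPseudoOrbit (f : X → X) (δ : ℝ) (x : ℕ → X) : Prop :=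
  ∀ n, dist (f (x n)) (x (n + 1)) < δ

theorem IsPseudoOrbit.mono {δ δ' : ℝ} {x : ℕ → X} (hx : IsPseudoOrbit f δ x) (h : δ ≤ δ') :
    IsPseudoOrbit f δ' x :=
  fun n => (hx n).trans_le h

theorem IsPseudoOrbit.prependOrbit {δ : ℝ} {x : ℕ → X} (hx : IsPseudoOrbit f δ x) (hδ : 0 < δ)
    {y : X} {i : ℕ} (hy : x 0 = f^[i] y) : IsPseudoOrbit f δ (prependOrbit f y i x) := by
  intro n
  rcases lt_or_ge n i with hn | hn
  · rw [prependOrbit_of_le hy hn.le, prependOrbit_of_le hy hn, ← iterate_succ_apply' f, dist_self]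
    exact hδ
  · obtain ⟨m, rfl⟩ := Nat.exists_eq_add_of_le' hn
    rw [add_right_comm, prependOrbit_add, prependOrbit_add]
    exact hx m

theorem IsPseudoOrbit.mem_of_mapsTo {η : ℝ} {x : ℕ → X} (hx : IsPseudoOrbit f η x)
    {P : ℕ → Set X} (hP : ∀ n, MapsTo f (P n) (P (n + 1)))
    (hsep : ∀ n, ∀ a ∈ P n, ∀ b, dist a b < η → b ∈ P n) (h0 : x 0 ∈ P 0) :
    ∀ n, x n ∈ P n
  | 0 => h0
  | n + 1 => hsep (n + 1) _ (hP n (hx.mem_of_mapsTo hP hsep h0 n)) _ (hx n)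

theorem UniformContinuous.exists_pos_forall_iterate_dist_lt (hf : UniformContinuous f) (L : ℕ)
    {ε : ℝ} (hε : 0 < ε) :
    ∃ δ > 0, ∀ r ≤ L, ∀ ⦃a b : X⦄, dist a b < δ → dist (f^[r] a) (f^[r] b) < ε := by
  have : ∀ᶠ p : X × X in uniformity X, ∀ r ∈ Finset.range (L + 1),
      dist (f^[r] p.1) (f^[r] p.2) < ε :=
    (eventually_all_finset _).2 fun r _ => UniformContinuous.iterate f r hf (dist_mem_uniformity hε)
  obtain ⟨δ, hδ, h⟩ := mem_uniformity_dist.1 this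
  exact ⟨δ, hδ, fun r hr a b hab => h hab r (Finset.mem_range_succ_iff.2 hr)⟩

theorem UniformContinuous.exists_pos_forall_dist_iterate_pseudoOrbit_lt
    (hf : UniformContinuous f) (L : ℕ) {ε : ℝ} (hε : 0 < ε) :
    ∃ δ > 0, ∀ x : ℕ → X, IsPseudoOrbit f δ x →
      ∀ r ≤ L, ∀ n, dist (f^[r] (x n)) (x (n + r)) < ε := by
  induction L generalizing ε with
  | zero => exact ⟨1, one_pos, fun x _ r hr n => by simp [Nat.le_zero.1 hr, hε]⟩
  | succ L ih =>
    obtain ⟨δ₁, hδ₁, hshort⟩ := ih (half_pos hε)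
    obtain ⟨δ₂, hδ₂, hfL⟩ :=
      Metric.uniformContinuous_iff.1 (UniformContinuous.iterate f L hf) _ (half_pos hε)
    refine ⟨min δ₁ δ₂, lt_min hδ₁ hδ₂, fun x hx r hr n => ?_⟩
    have hshort := hshort x (hx.mono (min_le_left _ _))
    rcases hr.lt_or_eq with hr | rfl
    · exact (hshort r (Nat.lt_succ_iff.1 hr) n).trans (half_lt_self hε)
    calc dist (f^[L + 1] (x n)) (x (n + (L + 1)))
        ≤ dist (f^[L] (f (x n))) (f^[L] (x (n + 1)))
          + dist (f^[L] (x (n + 1))) (x (n + 1 + L)) := by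
          rw [iterate_succ_apply, show n + (L + 1) = n + 1 + L by omega]
          exact dist_triangle _ _ _
      _ < ε / 2 + ε / 2 :=
          add_lt_add (hfL ((hx n).trans_le (min_le_right _ _))) (hshort L le_rfl (n + 1))
      _ = ε := add_halves ε

end PseudoOrbit

section Shadowing

variable {X : Type*} [MetricSpace X] {f : X → X}

theorem exists_pos_forall_dist_lt_mem_of_pairwiseDisjoint_cover {ι : Type*} {s : Finset ι}
    {C : ι → Set X} (hC : ∀ i ∈ s, IsCompact (C i)) (hdisj : (s : Set ι).PairwiseDisjoint C)
    (hcover : ∀ x, ∃ i ∈ s, x ∈ C i) :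
    ∃ η > 0, ∀ i ∈ s, ∀ a ∈ C i, ∀ b, dist a b < η → b ∈ C i := by
  classical
  have hopen : ∀ i ∈ s, IsOpen (C i) := by
    intro i hi
    have hcompl : (C i)ᶜ = ⋃ j ∈ s.erase i, C j := by
      ext x
      simp only [mem_compl_iff, mem_iUnion, Finset.mem_erase, exists_prop]
      constructor
      · intro hx
        obtain ⟨j, hj, hxj⟩ := hcover x
        exact ⟨j, ⟨fun h => hx (h ▸ hxj), hj⟩, hxj⟩
      · rintro ⟨j, ⟨hji, hj⟩, hxj⟩
        exact disjoint_left.1 (hdisj hj hi hji) hxj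
    rw [← isClosed_compl_iff, hcompl]
    exact isClosed_biUnion_finset fun j hj => (hC j (Finset.mem_of_mem_erase hj)).isClosed
  have : ∀ᶠ p : X × X in uniformity X, ∀ i ∈ s, p.1 ∈ C i → p.2 ∈ C i := by
    refine (eventually_all_finset s).2 fun i hi => ?_
    obtain ⟨η, hη, hsub⟩ := (hC i hi).exists_thickening_subset_open (hopen i hi) subset_rfl
    exact mem_uniformity_dist.2
      ⟨η, hη, fun a b hab ha => hsub (mem_thickening_iff.2 ⟨a, ha, by rwa [dist_comm]⟩)⟩
  obtain ⟨η, hη, h⟩ := mem_uniformity_dist.1 this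
  exact ⟨η, hη, fun i hi a ha b hab => h hab i hi ha⟩

theorem HasShadowingOn.exists_trace_of_mem_mul {L : ℕ} {Y : Set X}
    (hshad : HasShadowingOn f^[L] Y) (hf : UniformContinuous f) (hL : 0 < L) {ε : ℝ}
    (hε : 0 < ε) :
    ∃ δ > 0, ∀ x : ℕ → X, (∀ k, x (k * L) ∈ Y) → IsPseudoOrbit f δ x →
      ∃ z ∈ Y, ∀ n, dist (f^[n] z) (x n) < ε := by
  obtain ⟨ε₁, hε₁, hiter⟩ := hf.exists_pos_forall_iterate_dist_lt L (half_pos hε)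
  obtain ⟨δ₁, hδ₁, hδ₁shad⟩ := hshad ε₁ hε₁
  obtain ⟨δ, hδ, hchain⟩ :=
    hf.exists_pos_forall_dist_iterate_pseudoOrbit_lt L (lt_min hδ₁ (half_pos hε))
  refine ⟨δ, hδ, fun x hxY hx => ?_⟩
  have hclose := hchain x hx
  obtain ⟨z, hz, htrace⟩ := hδ₁shad (fun k => x (k * L)) hxY fun k => by
    simpa [add_mul] using (hclose L le_rfl (k * L)).trans_le (min_le_left _ _)
  refine ⟨z, hz, fun n => ?_⟩
  obtain ⟨k, r, hr, rfl⟩ : ∃ k r, r < L ∧ n = k * L + r :=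
    ⟨n / L, n % L, Nat.mod_lt n hL, (Nat.div_add_mod' n L).symm⟩
  have hzk : dist (f^[k * L] z) (x (k * L)) < ε₁ := by
    simpa only [← iterate_mul, mul_comm L k] using htrace k
  calc dist (f^[k * L + r] z) (x (k * L + r))
      ≤ dist (f^[r] (f^[k * L] z)) (f^[r] (x (k * L)))
        + dist (f^[r] (x (k * L))) (x (k * L + r)) := by
        rw [add_comm (k * L) r, iterate_add_apply, add_comm r]
        exact dist_triangle _ _ _
    _ < ε / 2 + ε / 2 :=
        add_lt_add (hiter r hr.le hzk) ((hclose r hr.le _).trans_le (min_le_right _ _))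
    _ = ε := add_halves ε

end Shadowing

/-- If `Y ⊆ X` is compact with `f^L(Y) ⊆ Y`, `(Y, f^L)` has the shadowing
property, `X = ⋃_{i=0}^{L-1} f^i(Y)` and the iterates `f^i(Y)` (`0 ≤ i ≤ L−1`) are
pairwise disjoint, then `(X, f)` has the shadowing property. -/
theorem shadowing_of_disjoint_cyclic_decomposition
    {X : Type*} [MetricSpace X] [CompactSpace X]
    (f : X → X) (hf : Continuous f) (L : ℕ) (hL : 0 < L)
    (Y : Set X) (hYc : IsCompact Y) (hYinv : f^[L] '' Y ⊆ Y)
    (hshad : HasShadowingOn (f^[L]) Y)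
    (hcover : (⋃ i ∈ Finset.range L, f^[i] '' Y) = Set.univ)
    (hdisj : ∀ i j : ℕ, i < j → j ≤ L - 1 → f^[i] '' Y ∩ f^[j] '' Y = ∅) :
    HasShadowingOn f Set.univ := by
  have hmem : ∀ a, ∃ i ∈ Finset.range L, a ∈ f^[i] '' Y := fun a => by
    simpa using hcover.ge (mem_univ a)
  have hpieces : (↑(Finset.range L) : Set ℕ).PairwiseDisjoint (fun i => f^[i] '' Y) := by
    intro i hi j hj hij
    simp only [Finset.coe_range, mem_Iio] at hi hj
    rcases hij.lt_or_gt with h | h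
    · exact disjoint_iff_inter_eq_empty.2 (hdisj i j h (by omega))
    · exact (disjoint_iff_inter_eq_empty.2 (hdisj j i h (by omega))).symm
  obtain ⟨η, hη, hsep⟩ := exists_pos_forall_dist_lt_mem_of_pairwiseDisjoint_cover
    (fun i _ => hYc.image (hf.iterate i)) hpieces hmem
  intro ε hε
  obtain ⟨δ, hδ, htrace⟩ :=
    hshad.exists_trace_of_mem_mul (CompactSpace.uniformContinuous_of_continuous hf) hL hε
  refine ⟨min δ η, lt_min hδ hη, fun x _ hx => ?_⟩
  obtain ⟨i, -, y, hy, hxy⟩ := hmem (x 0)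
  have hx' : IsPseudoOrbit f (min δ η) (prependOrbit f y i x) :=
    IsPseudoOrbit.prependOrbit hx (lt_min hδ hη) hxy.symm
  have hcyc : ∀ n, prependOrbit f y i x n ∈ f^[n % L] '' Y :=
    (hx'.mono (min_le_right _ _)).mem_of_mapsTo
      (mapsTo_image_iterate_mod (mapsTo_iff_image_subset.2 hYinv))
      (fun n => hsep _ (Finset.mem_range.2 (Nat.mod_lt n hL)))
      (by simpa [prependOrbit_of_le hxy.symm (Nat.zero_le i)] using hy)
  obtain ⟨z, -, hz⟩ :=
    htrace _ (fun k => by simpa using hcyc (k * L)) (hx'.mono (min_le_left _ _))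
  refine ⟨f^[i] z, mem_univ _, fun n => ?_⟩
  simpa [← iterate_add_apply, prependOrbit_add] using hz (n + i)
end

section
/- Let X := E ∪ σ(E) ⊂ {0,1,2}^ℤ as above (so in every point of X, all occurrences of the symbol 2 have positions of a single parity). Then (X,σ) does not satisfy the modified almost specification property: for any mistake function g and any function k_g, choosing α = (02)^∞ ∈ X (with α_0=0) and β = σ(α), for all sufficiently large n no point z∈X satisfies that z_0⋯z_{2n−1} differs from (02)^n in at most g(2n,ε) positions and z_{2n}⋯z_{4n−1} differs from (20)^n in at most g(2n,ε) positions. -/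
/-!
In a point of `E` the symbol `2` occurs only at odd positions, and in a point of `σ(E)` only
at even ones. Matching `(02)^n` with fewer than `n` mistakes forces a `2` at some odd position
of `[0, 2n)`, and matching `(20)^n` with fewer than `n` mistakes forces a `2` at some even
position of `[2n, 4n)`; since `g(2n, ε) = o(n)`, for large `n` a single point would need both.
-/

open Filter

/-- The two-sided shift map on `(Fin 3)^ℤ`. -/
def shiftZ (x : ℤ → Fin 3) : ℤ → Fin 3 := fun i => x (i + 1)

open Finset

def blockPairs : Set (Fin 3 × Fin 3) := {(0, 0), (0, 1), (1, 0), (0, 2)}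

def alignedBlocks : Set (ℤ → Fin 3) := {x | ∀ k : ℤ, (x (2 * k), x (2 * k + 1)) ∈ blockPairs}

lemma fst_ne_two_of_mem_blockPairs {p : Fin 3 × Fin 3} (hp : p ∈ blockPairs) : p.1 ≠ 2 := by
  rcases hp with rfl | rfl | rfl | rfl <;> decide

lemma apply_two_mul_ne_two {x : ℤ → Fin 3} (hx : x ∈ alignedBlocks) (k : ℤ) : x (2 * k) ≠ 2 :=
  fst_ne_two_of_mem_blockPairs (hx k)

lemma shiftZ_apply_two_mul_add_one_ne_two {x : ℤ → Fin 3} (hx : x ∈ alignedBlocks) (k : ℤ) :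
    shiftZ x (2 * k + 1) ≠ 2 := by
  have hk : 2 * k + 1 + 1 = 2 * (k + 1) := by ring
  simpa only [shiftZ, hk] using apply_two_mul_ne_two hx (k + 1)

lemma not_two_at_odd_and_even {z : ℤ → Fin 3} (hz : z ∈ alignedBlocks ∪ shiftZ '' alignedBlocks)
    {a b : ℤ} (ha : z (2 * a + 1) = 2) (hb : z (2 * b) = 2) : False := by
  rcases hz with hz | ⟨x, hx, rfl⟩
  · exact apply_two_mul_ne_two hz b hb
  · exact shiftZ_apply_two_mul_add_one_ne_two hx a ha

lemma exists_eq_of_card_filter_ne_lt {α : Type*} [DecidableEq α] {z w : ℕ → α} {f : ℕ → ℕ}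
    {N n : ℕ} (hf : Function.Injective f) (hfN : ∀ i < n, f i < N)
    (h : #((range N).filter fun j => z j ≠ w j) < n) : ∃ i < n, z (f i) = w (f i) := by
  have hcard : #((range n).map ⟨f, hf⟩) = n := by rw [card_map, card_range]
  obtain ⟨j, hj, hjs⟩ := exists_mem_notMem_of_card_lt_card (hcard ▸ h)
  obtain ⟨i, hi, rfl⟩ := Finset.mem_map.mp hj
  rw [mem_range] at hi
  refine ⟨i, hi, ?_⟩
  by_contra hne
  exact hjs (mem_filter.mpr ⟨mem_range.mpr (hfN i hi), hne⟩)

lemma eventually_mistakes_two_mul_lt {g : ℕ → ℕ}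
    (hg : Tendsto (fun n : ℕ => (g n : ℝ) / n) atTop (nhds 0)) :
    ∀ᶠ n : ℕ in atTop, g (2 * n) < n := by
  have hhalf : ∀ᶠ n : ℕ in atTop, 2 * g n < n := by
    filter_upwards [hg.eventually (gt_mem_nhds one_half_pos), eventually_gt_atTop 0]
      with n hn hn0
    rw [div_lt_iff₀ (by exact_mod_cast hn0)] at hn
    exact_mod_cast (by linarith : (2 * g n : ℝ) < n)
  filter_upwards [(tendsto_id.const_mul_atTop' two_pos).eventually hhalf] with n hn
  simp only [id] at hn
  omega

/-- With `E` the set of bi-infinite concatenations (aligned at even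
positions) of the blocks `00, 01, 10, 02` and `X := E ∪ σ(E)`, the subshift `(X,σ)`
fails modified almost specification: for any mistake function `g` and any `ε > 0`,
for all large `n` no point `z ∈ X` matches `(02)^n` on positions `0,…,2n−1` up to
`g(2n,ε)` mistakes and `(20)^n` on positions `2n,…,4n−1` up to `g(2n,ε)` mistakes. -/
theorem no_modified_almost_specification
    (E X : Set (ℤ → Fin 3))
    (hE : E = {x | ∀ k : ℤ, (x (2 * k), x (2 * k + 1)) ∈
      ({(0, 0), (0, 1), (1, 0), (0, 2)} : Set (Fin 3 × Fin 3))})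
    (hX : X = E ∪ shiftZ '' E)
    (g : ℕ → ℝ → ℕ)
    (hg : ∀ ε : ℝ, 0 < ε → Tendsto (fun n : ℕ => (g n ε : ℝ) / n) atTop (nhds 0)) :
    ∀ ε : ℝ, 0 < ε → ∀ᶠ n : ℕ in atTop,
      ¬ ∃ z ∈ X,
        ((Finset.range (2 * n)).filter fun j : ℕ =>
            z (j : ℤ) ≠ if Even j then (0 : Fin 3) else 2).card ≤ g (2 * n) ε ∧
        ((Finset.range (2 * n)).filter fun j : ℕ =>
            z ((2 * n + j : ℕ) : ℤ) ≠ if Even j then (2 : Fin 3) else 0).card ≤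
          g (2 * n) ε := by
  subst hE hX
  intro ε hε
  filter_upwards [eventually_mistakes_two_mul_lt (hg ε hε)] with n hn
  rintro ⟨z, hz, hfirst, hsecond⟩
  obtain ⟨m₁, -, hm₁⟩ := exists_eq_of_card_filter_ne_lt (f := fun i => 2 * i + 1)
    (fun a b h => by simp only at h; omega) (fun i hi => by omega) (hfirst.trans_lt hn)
  obtain ⟨m₂, -, hm₂⟩ := exists_eq_of_card_filter_ne_lt (f := fun i => 2 * i)
    (fun a b h => by simp only at h; omega) (fun i hi => by omega) (hsecond.trans_lt hn)
  simp only [Nat.not_even_bit1, even_two_mul, if_true, if_false] at hm₁ hm₂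
  push_cast at hm₁ hm₂
  rw [← mul_add] at hm₂
  exact not_two_at_odd_and_even hz hm₁ hm₂
end

section
/- Let N, M ∈ ℕ⁺ with N dividing M, let τ := NM, and let B_0 ⊂ X be a compact set with f^τ(B_0) ⊂ B_0 and B_0 ∩ f^{Nl}(B_0) = ∅ for all 1 ≤ l ≤ M−1. Suppose q ∈ {1,…,τ−1} is not a multiple of N, write q = Na + r with 0 ≤ a ≤ M−1 and 1 ≤ r ≤ N−1, set d := gcd(N,r) and m_q := N/d. Then B_0 ∩ f^{m_q · q}(B_0) = ∅. -/
/-!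
Write `d = gcd N r`. Since `q = N a + r`, `d` divides `q` and `m_q q = N (q / d)`. The quotient
`q / d` is not a multiple of `M`, for otherwise `N ∣ M ∣ q / d ∣ q`. As `f^τ` maps `B₀` into
itself, `f^{N k}(B₀) ⊆ f^{N (k mod M)}(B₀)`, and `1 ≤ (q / d) mod M ≤ M - 1` puts the right-hand
side, for `k = q / d`, among the sets disjoint from `B₀`.
-/

open Set

theorem image_iterate_subset_image_iterate_mod_s17 {α : Type*} {f : α → α} {s : Set α} {p : ℕ}
    (h : f^[p] '' s ⊆ s) (n : ℕ) : f^[n] '' s ⊆ f^[n % p] '' s := by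
  have hperiod : f^[p * (n / p)] '' s ⊆ s := by
    rw [Function.iterate_mul, ← mapsTo_iff_image_subset]
    exact (mapsTo_iff_image_subset.mpr h).iterate _
  conv_lhs => rw [← Nat.mod_add_div n p, Function.iterate_add, image_comp]
  exact image_mono hperiod

theorem image_iterate_mul_subset_image_iterate_mul_mod {α : Type*} {f : α → α} {s : Set α}
    {N M : ℕ} (h : f^[N * M] '' s ⊆ s) (k : ℕ) : f^[N * k] '' s ⊆ f^[N * (k % M)] '' s := by
  simpa only [Nat.mul_mod_mul_left] using image_iterate_subset_image_iterate_mod_s17 h (N * k)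

theorem pruning_multiplicity_bound_general
    {X : Type*}
    (f : X → X)
    (N M : ℕ) (hM : 0 < M) (hNM : N ∣ M)
    (B₀ : Set X)
    (hinv : f^[N * M] '' B₀ ⊆ B₀)
    (hdisj : ∀ l : ℕ, 1 ≤ l → l ≤ M - 1 → B₀ ∩ f^[N * l] '' B₀ = ∅)
    (q : ℕ) (hqN : ¬ N ∣ q)
    (a r : ℕ) (hq : q = N * a + r) :
    B₀ ∩ f^[(N / Nat.gcd N r) * q] '' B₀ = ∅ := by
  set d := Nat.gcd N r
  have hdN : d ∣ N := Nat.gcd_dvd_left N r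
  have hdq : d ∣ q := hq ▸ dvd_add (hdN.mul_right a) (Nat.gcd_dvd_right N r)
  have hexp : N / d * q = N * (q / d) := by
    rw [Nat.div_mul_right_comm hdN, Nat.mul_div_assoc _ hdq]
  have hk : ¬ M ∣ q / d := fun h => hqN ((hNM.trans h).trans (Nat.div_dvd_of_dvd hdq))
  have hpos : 1 ≤ q / d % M := Nat.pos_of_ne_zero (mt Nat.dvd_of_mod_eq_zero hk)
  have hlt : q / d % M ≤ M - 1 := Nat.le_sub_one_of_lt (Nat.mod_lt _ hM)
  rw [hexp, ← subset_empty_iff, ← hdisj _ hpos hlt]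
  exact inter_subset_inter_right _ (image_iterate_mul_subset_image_iterate_mul_mod hinv _)

/-- Let `N ∣ M`, `τ = N·M`, and `B₀` compact with `f^τ(B₀) ⊆ B₀` and
`B₀ ∩ f^{Nl}(B₀) = ∅` for `1 ≤ l ≤ M−1`. If `q ∈ {1,…,τ−1}` is not a multiple of `N`,
`q = Na + r` with `0 ≤ a ≤ M−1`, `1 ≤ r ≤ N−1`, `d = gcd(N,r)` and `m_q = N/d`, then
`B₀ ∩ f^{m_q·q}(B₀) = ∅`. -/
theorem pruning_multiplicity_bound
    {X : Type*} [MetricSpace X] [CompactSpace X]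
    (f : X → X) (hf : Continuous f)
    (N M : ℕ) (hN : 0 < N) (hM : 0 < M) (hNM : N ∣ M)
    (B₀ : Set X) (hB₀c : IsCompact B₀)
    (hinv : f^[N * M] '' B₀ ⊆ B₀)
    (hdisj : ∀ l : ℕ, 1 ≤ l → l ≤ M - 1 → B₀ ∩ f^[N * l] '' B₀ = ∅)
    (q : ℕ) (hq1 : 1 ≤ q) (hq2 : q ≤ N * M - 1) (hqN : ¬ N ∣ q)
    (a r : ℕ) (hq : q = N * a + r) (ha : a ≤ M - 1) (hr1 : 1 ≤ r) (hr2 : r ≤ N - 1) :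
    B₀ ∩ f^[(N / Nat.gcd N r) * q] '' B₀ = ∅ :=
  pruning_multiplicity_bound_general f N M hM hNM B₀ hinv hdisj q hqN a r hq
end
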